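/- arXiv:2112.11871 — 7 statements merged into one kernel-verified Lean document; each statement's English description precedes it below -/
import Mathlib

section
/- Let I ⊆ (0,∞) be a nonempty open interval and a, b ∈ ℝ. Define f(x) := x^a if a ≠ 0 and f(x) := log x if a = 0, and g(x) := x^b if b ≠ 0 and g(x) := log x if b = 0. Let n ≥ 2, let λ_1,…,λ_n, μ_1,…,μ_n > 0 and α_1,…,α_n, β_1,…,β_n ∈ ℝ, and define p_i(x) := λ_i x^{α_i} and q_i(x) := μ_i x^{β_i}. If A_{f,p} is locally smaller than A_{g,q}, then there exist γ > 0 and δ ∈ ℝ such that μ_i = γ λ_i and β_i = α_i + δ for all i ∈ {1,…,n}, and a ≤ b + 2δ. -/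
open Set Function Real

/-- The `n`-variable generalized Bajraktarević mean `A_{f,p}` on the interval `I`:
`A_{f,p}(x) = f⁻¹((∑ pᵢ(xᵢ) f(xᵢ)) / (∑ pᵢ(xᵢ)))`. -/
noncomputable def bajMean {n : ℕ} (I : Set ℝ) (f : ℝ → ℝ) (p : Fin n → ℝ → ℝ)
    (x : Fin n → ℝ) : ℝ :=
  Function.invFunOn f I ((∑ i, p i (x i) * f (x i)) / (∑ i, p i (x i)))

/-- The `i`-th first-order partial derivative of `Φ : Iⁿ → ℝ`. -/
noncomputable def pder {n : ℕ} (Φ : (Fin n → ℝ) → ℝ) (i : Fin n) (y : Fin n → ℝ) : ℝ :=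
  deriv (fun t => Φ (Function.update y i t)) (y i)

/-- The second-order partial derivative `∂ᵢ∂ⱼΦ`. -/
noncomputable def pder2 {n : ℕ} (Φ : (Fin n → ℝ) → ℝ) (i j : Fin n) :
    (Fin n → ℝ) → ℝ :=
  pder (pder Φ j) i

/-- `M` is locally smaller than `N`: there is an open set `U ⊆ Iⁿ` containing the
diagonal of `Iⁿ` on which `M ≤ N`. -/
def LocallySmaller {n : ℕ} (I : Set ℝ) (M N : (Fin n → ℝ) → ℝ) : Prop :=
  ∃ U : Set (Fin n → ℝ), IsOpen U ∧ U ⊆ {x | ∀ i, x i ∈ I} ∧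
    (∀ x ∈ I, (fun _ => x) ∈ U) ∧ ∀ x ∈ U, M x ≤ N x

/-!
Move only the `i`-th variable away from the diagonal point `(x, …, x)`, along `t = x eˢ`.
For power means with power weights the mean along this curve is `x · exp (m s)` with an
explicit `m` (`logMeanRatio`), and `m 0 = 0`, `m' 0 = W`, `m'' 0 = (2α + a) W (1 - W)`, where
`W ∈ (0, 1)` is the relative weight of the moving variable on the diagonal. If one mean is
locally below the other, their `m`'s touch at `s = 0`: the first derivatives agree and the
second derivatives are ordered. Equal relative weights for every `i` and every `x ∈ I` make
`(μᵢ/λᵢ) x^{βᵢ-αᵢ}` independent of `i`, and two points of `I` then give `γ` and `δ`; the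
second-order inequality reads `2αᵢ + a ≤ 2βᵢ + b`.
-/

open Filter Topology

lemma IsLocalMin.deriv_deriv_nonneg {f : ℝ → ℝ} {x : ℝ} (hmin : IsLocalMin f x)
    (hc : ContinuousAt f x) : 0 ≤ deriv (deriv f) x := by
  by_contra! hneg
  have hconst : f =ᶠ[𝓝 x] fun _ => f x := by
    filter_upwards [hmin, isLocalMax_of_deriv_deriv_neg hneg hmin.deriv_eq_zero hc] with y h₁ h₂
    exact le_antisymm h₂ h₁
  rw [hconst.deriv.deriv_eq] at hneg
  simp at hneg

lemma Filter.EventuallyLE.hasDerivAt_eq_and_le {u v u' v' : ℝ → ℝ} {x Du Dv : ℝ}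
    (hle : u ≤ᶠ[𝓝 x] v) (heq : u x = v x)
    (hu : ∀ᶠ s in 𝓝 x, HasDerivAt u (u' s) s) (hv : ∀ᶠ s in 𝓝 x, HasDerivAt v (v' s) s)
    (hu' : HasDerivAt u' Du x) (hv' : HasDerivAt v' Dv x) :
    u' x = v' x ∧ Du ≤ Dv := by
  have hmin : IsLocalMin (v - u) x := by
    filter_upwards [hle] with s hs
    simp [heq, hs]
  have hderiv : deriv (v - u) =ᶠ[𝓝 x] v' - u' := by
    filter_upwards [hu, hv] with s hus hvs
    exact (hvs.sub hus).deriv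
  have hfirst := hmin.deriv_eq_zero
  have hsecond := hmin.deriv_deriv_nonneg (hv.self_of_nhds.sub hu.self_of_nhds).continuousAt
  rw [hderiv.eq_of_nhds] at hfirst
  rw [hderiv.deriv_eq, (hv'.sub hu').deriv] at hsecond
  exact ⟨(sub_eq_zero.mp hfirst).symm, sub_nonneg.mp hsecond⟩

lemma eq_and_eq_of_mul_rpow_eq {c c' d d' x y : ℝ} (hc : 0 < c) (hc' : 0 < c')
    (hx : 0 < x) (hy : 0 < y) (hxy : x ≠ y)
    (hx_eq : c * x ^ d = c' * x ^ d') (hy_eq : c * y ^ d = c' * y ^ d') : c = c' ∧ d = d' := by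
  have hlog : ∀ z, 0 < z → c * z ^ d = c' * z ^ d' → log c + d * log z = log c' + d' * log z := by
    intro z hz h
    have := congrArg log h
    rwa [log_mul hc.ne' (rpow_pos_of_pos hz _).ne', log_mul hc'.ne' (rpow_pos_of_pos hz _).ne',
      log_rpow hz, log_rpow hz] at this
  have hlog_ne : log x - log y ≠ 0 :=
    sub_ne_zero.mpr fun h => hxy (log_injOn_pos hx hy h)
  have hd : d = d' := mul_right_cancel₀ hlog_ne
    (by linear_combination hlog x hx hx_eq - hlog y hy hy_eq)
  subst hd
  exact ⟨mul_right_cancel₀ (rpow_pos_of_pos hx d).ne' hx_eq, rfl⟩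

lemma mul_exp_rpow {x : ℝ} (hx : 0 ≤ x) (s c : ℝ) : (x * exp s) ^ c = x ^ c * exp (c * s) := by
  rw [mul_rpow hx (exp_pos s).le, ← exp_mul, mul_comm s c]

noncomputable def powLog (a x : ℝ) : ℝ := if a = 0 then log x else x ^ a

lemma powLog_injOn (a : ℝ) : InjOn (powLog a) (Ioi 0) := by
  unfold powLog
  split_ifs with ha
  · exact log_injOn_pos
  · exact (rpow_left_injOn ha).mono fun _ hx => le_of_lt (mem_Ioi.mp hx)

lemma powLog_continuousOn (a : ℝ) : ContinuousOn (powLog a) (Ioi 0) := by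
  unfold powLog
  split_ifs with ha
  · exact continuousOn_log.mono fun _ hx => ne_of_gt hx
  · exact fun x hx => (continuousAt_rpow_const x a (Or.inl (ne_of_gt hx))).continuousWithinAt

lemma bajMean_mem_and_apply_eq {n : ℕ} {I : Set ℝ} {f : ℝ → ℝ} {p : Fin n → ℝ → ℝ}
    {x : Fin n → ℝ} (hI : I.OrdConnected) (hf : ContinuousOn f I) (hx : ∀ i, x i ∈ I)
    (hp : ∀ i, 0 ≤ p i (x i)) (hsum : 0 < ∑ i, p i (x i)) :
    bajMean I f p x ∈ I ∧
      f (bajMean I f p x) = (∑ i, p i (x i) * f (x i)) / ∑ i, p i (x i) := by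
  have hconv : Convex ℝ (f '' I) := (hI.isPreconnected.image f hf).ordConnected.convex
  have hmem : (∑ i, p i (x i) * f (x i)) / ∑ i, p i (x i) ∈ f '' I := by
    have := hconv.centerMass_mem (t := Finset.univ) (z := fun i => f (x i))
      (fun i _ => hp i) hsum (fun i _ => mem_image_of_mem f (hx i))
    rwa [Finset.centerMass, smul_eq_mul, inv_mul_eq_div] at this
  exact ⟨invFunOn_mem hmem, invFunOn_eq hmem⟩

section LogMeanRatio

variable {P w : ℝ}

lemma add_mul_exp_pos (hP : 0 ≤ P) (hw : 0 < w) (c : ℝ) : 0 < P + w * exp c := by positivity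

variable (P w) in
noncomputable def weightShare (c s : ℝ) : ℝ := w * exp (c * s) / (P + w * exp (c * s))

lemma weightShare_zero (c : ℝ) : weightShare P w c 0 = w / (P + w) := by
  simp [weightShare]

lemma hasDerivAt_mul_exp_mul (w c s : ℝ) :
    HasDerivAt (fun s => w * exp (c * s)) (w * (exp (c * s) * c)) s :=
  (((hasDerivAt_id s).const_mul c).exp.congr_deriv (by simp)).const_mul w

lemma hasDerivAt_weightShare (hP : 0 ≤ P) (hw : 0 < w) (c s : ℝ) :
    HasDerivAt (weightShare P w c)
      (c * weightShare P w c s * (1 - weightShare P w c s)) s := by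
  have hE := hasDerivAt_mul_exp_mul w c s
  refine (hE.div (hE.const_add P) (add_mul_exp_pos hP hw (c * s)).ne').congr_deriv ?_
  unfold weightShare
  field_simp

lemma hasDerivAt_log_add_mul_exp (hP : 0 ≤ P) (hw : 0 < w) (c s : ℝ) :
    HasDerivAt (fun s => log (P + w * exp (c * s))) (c * weightShare P w c s) s := by
  refine (((hasDerivAt_mul_exp_mul w c s).const_add P).log
    (add_mul_exp_pos hP hw (c * s)).ne').congr_deriv ?_
  unfold weightShare
  ring

variable (P w) in
/-- `log (M / x)`, where `M` is the mean generated by `powLog a` of `x` with weight `P` and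
`x * exp s` with weight `w * exp (α * s)`. -/
noncomputable def logMeanRatio (α a s : ℝ) : ℝ :=
  if a = 0 then s * weightShare P w α s
  else (log (P + w * exp ((α + a) * s)) - log (P + w * exp (α * s))) / a

@[simp]
lemma logMeanRatio_zero (α a : ℝ) : logMeanRatio P w α a 0 = 0 := by
  unfold logMeanRatio
  split_ifs <;> simp

lemma powLog_mul_exp_logMeanRatio {x : ℝ} (hx : 0 < x) (hP : 0 ≤ P) (hw : 0 < w)
    (α a s : ℝ) :
    powLog a (x * exp (logMeanRatio P w α a s)) =
      (P * powLog a x + w * exp (α * s) * powLog a (x * exp s)) / (P + w * exp (α * s)) := by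
  have hB := add_mul_exp_pos hP hw (α * s)
  by_cases ha : a = 0
  · simp only [powLog, logMeanRatio, weightShare, ha, if_true,
      log_mul hx.ne' (exp_pos _).ne', log_exp]
    field_simp
    ring
  · have hA := add_mul_exp_pos hP hw ((α + a) * s)
    simp only [powLog, logMeanRatio, ha, if_false, mul_exp_rpow hx.le]
    rw [mul_div_cancel₀ _ ha, exp_sub, exp_log hA, exp_log hB, add_mul, exp_add]
    field_simp

lemma logMeanRatio_second_order (hP : 0 ≤ P) (hw : 0 < w) (α a : ℝ) :
    ∃ m' : ℝ → ℝ, (∀ s, HasDerivAt (logMeanRatio P w α a) (m' s) s) ∧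
      m' 0 = w / (P + w) ∧
      HasDerivAt m' ((2 * α + a) * (w / (P + w)) * (1 - w / (P + w))) 0 := by
  have hσ := hasDerivAt_weightShare hP hw
  by_cases ha : a = 0
  · subst ha
    have hm : logMeanRatio P w α 0 = fun s => s * weightShare P w α s := by
      funext s; simp [logMeanRatio]
    set g : ℝ → ℝ := fun s => α * weightShare P w α s * (1 - weightShare P w α s)
    have hg : DifferentiableAt ℝ g 0 :=
      (((hσ α 0).differentiableAt.const_mul α).mul
        ((hσ α 0).differentiableAt.const_sub 1))
    refine ⟨fun s => weightShare P w α s + s * g s, fun s => ?_, by simp [weightShare_zero], ?_⟩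
    · rw [hm]
      exact ((hasDerivAt_id' s).mul (hσ α s)).congr_deriv (by simp only [g, one_mul])
    · refine ((hσ α 0).add ((hasDerivAt_id' 0).mul hg.hasDerivAt)).congr_deriv ?_
      simp only [g, weightShare_zero]
      ring
  · have hm : logMeanRatio P w α a = fun s =>
        (log (P + w * exp ((α + a) * s)) - log (P + w * exp (α * s))) / a := by
      funext s; simp [logMeanRatio, ha]
    refine ⟨fun s => ((α + a) * weightShare P w (α + a) s - α * weightShare P w α s) / a,
      fun s => ?_, ?_, ?_⟩
    · rw [hm]
      exact ((hasDerivAt_log_add_mul_exp hP hw (α + a) s).sub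
        (hasDerivAt_log_add_mul_exp hP hw α s)).div_const a
    · dsimp only
      rw [weightShare_zero, weightShare_zero]
      field_simp
      ring
    · refine ((((hσ (α + a) 0).const_mul (α + a)).sub
        ((hσ α 0).const_mul α)).div_const a).congr_deriv ?_
      simp only [weightShare_zero]
      field_simp
      ring

end LogMeanRatio

lemma sum_apply_update_const {ι α M : Type*} [Fintype ι] [DecidableEq ι] [AddCommMonoid M]
    (g : ι → α → M) (i : ι) (x t : α) :
    ∑ k, g k (update (fun _ => x) i t k) = g i t + ∑ k ∈ Finset.univ \ {i}, g k x := by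
  simp_rw [apply_update (fun k => g k) (fun _ => x) i t]
  exact Finset.sum_update_of_mem (Finset.mem_univ i) _ _

lemma weight_share_mul_one_sub_pos {P w : ℝ} (hP : 0 < P) (hw : 0 < w) :
    0 < w / (P + w) * (1 - w / (P + w)) :=
  mul_pos (by positivity) (sub_pos.mpr ((div_lt_one (by positivity)).mpr (by linarith)))

lemma ratio_eq_of_weight_share_eq {x l m α β P Q : ℝ} (hx : 0 < x) (hl : 0 < l)
    (hP : 0 < P) (hQ : 0 < Q) (hv : 0 < m * x ^ β)
    (h : l * x ^ α / (P + l * x ^ α) = m * x ^ β / (Q + m * x ^ β)) :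
    m / l * x ^ (β - α) = (Q + m * x ^ β) / (P + l * x ^ α) := by
  rw [div_eq_div_iff (by positivity) (by positivity)] at h
  have := (rpow_pos_of_pos hx α).ne'
  have := hl.ne'
  have : P + l * x ^ α ≠ 0 := by positivity
  rw [rpow_sub hx]
  field_simp
  linear_combination -h

section PowerMeans

variable {n : ℕ} {I : Set ℝ} {lam al : Fin n → ℝ}

lemma bajMean_update_mul_exp (hI : I.OrdConnected) (hIpos : I ⊆ Ioi 0) (a : ℝ)
    (hlam : ∀ k, 0 < lam k) (i : Fin n) {x s : ℝ} (hx : x ∈ I) (hxs : x * exp s ∈ I) :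
    bajMean I (powLog a) (fun k t => lam k * t ^ al k) (update (fun _ => x) i (x * exp s)) =
      x * exp (logMeanRatio (∑ k ∈ Finset.univ \ {i}, lam k * x ^ al k) (lam i * x ^ al i)
        (al i) a s) := by
  have hx₀ : 0 < x := hIpos hx
  have hweight : ∀ k t, 0 < t → 0 < lam k * t ^ al k :=
    fun k t ht => mul_pos (hlam k) (rpow_pos_of_pos ht _)
  have hP : 0 ≤ ∑ k ∈ Finset.univ \ {i}, lam k * x ^ al k :=
    Finset.sum_nonneg fun k _ => (hweight k x hx₀).le
  have hmem : ∀ k, update (fun _ => x) i (x * exp s) k ∈ I := by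
    intro k
    rcases eq_or_ne k i with rfl | hk
    · simpa using hxs
    · simpa [hk] using hx
  have hpos : ∀ k, 0 < lam k * update (fun _ => x) i (x * exp s) k ^ al k :=
    fun k => hweight k _ (hIpos (hmem k))
  obtain ⟨hmeanI, hmean⟩ := bajMean_mem_and_apply_eq (p := fun k t => lam k * t ^ al k) hI
    ((powLog_continuousOn a).mono hIpos) hmem
    (fun k => (hpos k).le) (Finset.sum_pos (fun k _ => hpos k) ⟨i, Finset.mem_univ i⟩)
  refine powLog_injOn a (hIpos hmeanI) (mul_pos hx₀ (exp_pos _)) ?_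
  rw [hmean, powLog_mul_exp_logMeanRatio hx₀ hP (hweight i x hx₀),
    sum_apply_update_const (fun k t => lam k * t ^ al k * powLog a t),
    sum_apply_update_const (fun k t => lam k * t ^ al k), ← Finset.sum_mul,
    mul_exp_rpow hx₀.le]
  ring

variable {mu be : Fin n → ℝ}

lemma LocallySmaller.logMeanRatio_le (hI : I.OrdConnected) (hIpos : I ⊆ Ioi 0) {a b : ℝ}
    (hlam : ∀ k, 0 < lam k) (hmu : ∀ k, 0 < mu k)
    (hloc : LocallySmaller I (bajMean I (powLog a) (fun k t => lam k * t ^ al k))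
      (bajMean I (powLog b) (fun k t => mu k * t ^ be k)))
    {x : ℝ} (hx : x ∈ I) (i : Fin n) :
    (logMeanRatio (∑ k ∈ Finset.univ \ {i}, lam k * x ^ al k) (lam i * x ^ al i) (al i) a)
      ≤ᶠ[𝓝 0]
      logMeanRatio (∑ k ∈ Finset.univ \ {i}, mu k * x ^ be k) (mu i * x ^ be i) (be i) b := by
  obtain ⟨U, hUopen, hUsub, hUdiag, hle⟩ := hloc
  have hcurve : Continuous fun s => update (fun _ => x) i (x * exp s) :=
    continuous_const.update i (continuous_const.mul continuous_exp)
  have hdiag : update (fun _ => x) i (x * exp 0) ∈ U := by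
    simpa using hUdiag x hx
  filter_upwards [hcurve.continuousAt.preimage_mem_nhds (hUopen.mem_nhds hdiag)] with s hs
  have hxs : x * exp s ∈ I := by simpa using hUsub hs i
  have hmeans := hle _ hs
  rw [bajMean_update_mul_exp hI hIpos a hlam i hx hxs,
    bajMean_update_mul_exp hI hIpos b hmu i hx hxs] at hmeans
  exact exp_le_exp.mp (le_of_mul_le_mul_left hmeans (hIpos hx))

lemma LocallySmaller.weight_ratio_eq_and_le (hn : 2 ≤ n) (hI : I.OrdConnected)
    (hIpos : I ⊆ Ioi 0) {a b : ℝ} (hlam : ∀ k, 0 < lam k) (hmu : ∀ k, 0 < mu k)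
    (hloc : LocallySmaller I (bajMean I (powLog a) (fun k t => lam k * t ^ al k))
      (bajMean I (powLog b) (fun k t => mu k * t ^ be k)))
    {x : ℝ} (hx : x ∈ I) (i : Fin n) :
    mu i / lam i * x ^ (be i - al i) = (∑ k, mu k * x ^ be k) / ∑ k, lam k * x ^ al k ∧
      2 * al i + a ≤ 2 * be i + b := by
  have hx₀ : 0 < x := hIpos hx
  have : Nontrivial (Fin n) := Fin.nontrivial_iff_two_le.mpr hn
  obtain ⟨j, hji⟩ := exists_ne i
  have hrest : ∀ c e : Fin n → ℝ, (∀ k, 0 < c k) →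
      0 < ∑ k ∈ Finset.univ \ {i}, c k * x ^ e k := fun c e hc =>
    Finset.sum_pos (fun k _ => mul_pos (hc k) (rpow_pos_of_pos hx₀ _)) ⟨j, by simpa using hji⟩
  set P := ∑ k ∈ Finset.univ \ {i}, lam k * x ^ al k
  set Q := ∑ k ∈ Finset.univ \ {i}, mu k * x ^ be k
  have hP : 0 < P := hrest lam al hlam
  have hQ : 0 < Q := hrest mu be hmu
  have hw : 0 < lam i * x ^ al i := mul_pos (hlam i) (rpow_pos_of_pos hx₀ _)
  have hv : 0 < mu i * x ^ be i := mul_pos (hmu i) (rpow_pos_of_pos hx₀ _)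
  obtain ⟨m, hm, hm0, hm'⟩ := logMeanRatio_second_order hP.le hw (al i) a
  obtain ⟨m₂, hm₂, hm₂0, hm₂'⟩ := logMeanRatio_second_order hQ.le hv (be i) b
  obtain ⟨hfirst, hsecond⟩ := (hloc.logMeanRatio_le hI hIpos hlam hmu hx i).hasDerivAt_eq_and_le
    (by simp) (Eventually.of_forall hm) (Eventually.of_forall hm₂) hm' hm₂'
  rw [hm0, hm₂0] at hfirst
  rw [hfirst] at hsecond
  refine ⟨?_, le_of_mul_le_mul_right (by simpa only [mul_assoc] using hsecond)
    (weight_share_mul_one_sub_pos hQ hv)⟩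
  have hsplit : ∀ c e : Fin n → ℝ, ∑ k, c k * x ^ e k =
      ∑ k ∈ Finset.univ \ {i}, c k * x ^ e k + c i * x ^ e i := fun c e =>
    Finset.sum_eq_sum_sdiff_singleton_add (Finset.mem_univ i) _
  rw [hsplit, hsplit]
  exact ratio_eq_of_weight_share_eq hx₀ (hlam i) hP hQ hv hfirst

end PowerMeans

/-- Corollary LCpp, necessity: with `f(x) = x^a` (`f = log` if `a = 0`),
`g(x) = x^b` (`g = log` if `b = 0`) and power weights `pᵢ(x) = λᵢ x^{αᵢ}`,
`qᵢ(x) = μᵢ x^{βᵢ}` on `I ⊆ (0,∞)`, if `A_{f,p}` is locally smaller than `A_{g,q}`,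
then there exist `γ > 0` and `δ ∈ ℝ` such that `μᵢ = γλᵢ`, `βᵢ = αᵢ + δ` for all `i`,
and `a ≤ b + 2δ`. -/
theorem stmt11 {n : ℕ} (hn : 2 ≤ n) (I : Set ℝ) (hIopen : IsOpen I)
    (hIconn : I.OrdConnected) (hIne : I.Nonempty) (hIpos : I ⊆ Set.Ioi (0 : ℝ))
    (a b : ℝ)
    (lam mu : Fin n → ℝ) (al be : Fin n → ℝ)
    (hlam : ∀ i, 0 < lam i) (hmu : ∀ i, 0 < mu i)
    (hloc : LocallySmaller I
      (bajMean I (fun x => if a = 0 then Real.log x else x ^ a)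
        (fun i x => lam i * x ^ al i))
      (bajMean I (fun x => if b = 0 then Real.log x else x ^ b)
        (fun i x => mu i * x ^ be i))) :
    ∃ γ : ℝ, 0 < γ ∧ ∃ δ : ℝ,
      (∀ i : Fin n, mu i = γ * lam i ∧ be i = al i + δ) ∧ a ≤ b + 2 * δ := by
  have key := fun x (hx : x ∈ I) =>
    hloc.weight_ratio_eq_and_le hn hIconn hIpos hlam hmu hx
  obtain ⟨x₀, hx₀⟩ := hIne
  obtain ⟨x₁, hx₁, hx₁₀⟩ : ∃ x₁ ∈ I, x₁ ≠ x₀ :=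
    (Eventually.and (mem_nhdsWithin_of_mem_nhds (hIopen.mem_nhds hx₀) : ∀ᶠ x in 𝓝[≠] x₀, x ∈ I)
      self_mem_nhdsWithin).exists
  let i₀ : Fin n := ⟨0, by omega⟩
  refine ⟨mu i₀ / lam i₀, div_pos (hmu i₀) (hlam i₀), be i₀ - al i₀, fun i => ?_,
    by linarith [(key x₀ hx₀ i₀).2]⟩
  obtain ⟨hcoef, hexp⟩ := eq_and_eq_of_mul_rpow_eq (div_pos (hmu i) (hlam i))
    (div_pos (hmu i₀) (hlam i₀)) (hIpos hx₀) (hIpos hx₁) hx₁₀.symm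
    ((key x₀ hx₀ i).1.trans (key x₀ hx₀ i₀).1.symm)
    ((key x₁ hx₁ i).1.trans (key x₁ hx₁ i₀).1.symm)
  refine ⟨?_, by linarith⟩
  rw [← hcoef]
  field_simp [(hlam i).ne']
end

section
/- Let I ⊆ (0,∞) be a nonempty open interval and a, b ∈ ℝ. Define f(x) := x^a if a ≠ 0 and f(x) := log x if a = 0, and g(x) := x^b if b ≠ 0 and g(x) := log x if b = 0. Let n ≥ 2, let λ_1,…,λ_n, μ_1,…,μ_n > 0 and α_1,…,α_n, β_1,…,β_n ∈ ℝ, and define p_i(x) := λ_i x^{α_i} and q_i(x) := μ_i x^{β_i}. If there exist γ > 0 and δ ∈ ℝ such that μ_i = γ λ_i and β_i = α_i + δ for all i ∈ {1,…,n}, and a < b + 2δ, then A_{f,p} is locally smaller than A_{g,q}. -/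
/-!
Write `xᵢ = X e^{ηᵢ}` with `X = min xᵢ` and put `wᵢ = λᵢ xᵢ^{αᵢ}`. Both means are then `X` times
the exponential of a secant slope of the convex function `L(t) = log ∑ wᵢ e^{t ηᵢ}`: of `L` over
`[0, a]` for `A_{f,p}` and over `[δ, δ + b]` for `A_{g,q}` (the derivative `L'(0)`, `L'(δ)` when
`a = 0`, `b = 0`). A secant slope of `L` is within `(sup L'' - inf L'') / 8` times its length of
`L'` at the midpoint, and `L'` increases by at least `inf L''` times the distance between the
midpoints `a / 2 < δ + b / 2`. Near the diagonal all `ηᵢ` lie in `[0, ε]`, so `L''`, the variance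
of `η` under the weights `wᵢ e^{t ηᵢ}`, changes by a factor at most `e^{O(ε)}` on a bounded
interval, and the gap between the midpoints wins.
-/

open Set Function Real

lemma Convex.add_div_two_mem {S : Set ℝ} (hS : Convex ℝ S) {u v : ℝ} (hu : u ∈ S)
    (hv : v ∈ S) : (u + v) / 2 ∈ S := by
  convert hS.midpoint_mem hu hv using 1
  rw [midpoint_eq_smul_add, smul_eq_mul, invOf_eq_inv]
  ring

noncomputable def secantSlope (F F' : ℝ → ℝ) (u v : ℝ) : ℝ :=
  if u = v then F' u else slope F u v

lemma secantSlope_comm (F F' : ℝ → ℝ) (u v : ℝ) :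
    secantSlope F F' u v = secantSlope F F' v u := by
  unfold secantSlope
  by_cases h : u = v
  · subst h; rfl
  · rw [if_neg h, if_neg (Ne.symm h), slope_comm]

lemma secantSlope_mem_Icc {F F' : ℝ → ℝ} {lo hi : ℝ} (hF : ∀ t, HasDerivAt F (F' t) t)
    (hF' : ∀ t, F' t ∈ Icc lo hi) (u v : ℝ) : secantSlope F F' u v ∈ Icc lo hi := by
  wlog huv : u ≤ v generalizing u v
  · rw [secantSlope_comm]
    exact this v u (le_of_not_ge huv)
  rcases huv.eq_or_lt with rfl | huv
  · simpa [secantSlope] using hF' u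
  obtain ⟨ξ, -, hξ⟩ := exists_hasDerivAt_eq_slope F F' huv
    (fun t _ => (hF t).continuousAt.continuousWithinAt) (fun t _ => hF t)
  rw [secantSlope, if_neg huv.ne, slope_def_field, ← hξ]
  exact hF' ξ

lemma hasDerivAt_div_two_mul_sq (m t : ℝ) : HasDerivAt (fun t => m / 2 * t ^ 2) (m * t) t :=
  (((hasDerivAt_id t).fun_pow 2).const_mul (m / 2)).congr_deriv
    (by simp only [Nat.cast_ofNat, id_eq, Nat.add_one_sub_one, pow_one, mul_one]; ring)

section SecondDerivativeBounds

variable {F F' F'' : ℝ → ℝ} {S : Set ℝ} {m M : ℝ}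

lemma convexOn_sub_mul_sq (hS : Convex ℝ S) (hF : ∀ t ∈ S, HasDerivAt F (F' t) t)
    (hF' : ∀ t ∈ S, HasDerivAt F' (F'' t) t) (hm : ∀ t ∈ S, m ≤ F'' t) :
    ConvexOn ℝ S (fun t => F t - m / 2 * t ^ 2) := by
  refine convexOn_of_hasDerivWithinAt2_nonneg hS (f' := fun t => F' t - m * t)
    (f'' := fun t => F'' t - m)
    (fun t ht => ((hF t ht).sub (hasDerivAt_div_two_mul_sq m t)).continuousAt.continuousWithinAt)
    (fun t ht => ((hF t (interior_subset ht)).sub (hasDerivAt_div_two_mul_sq m t)).hasDerivWithinAt)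
    (fun t ht => ?_) (fun t ht => sub_nonneg.2 (hm t (interior_subset ht)))
  exact (((hF' t (interior_subset ht)).fun_sub ((hasDerivAt_id' t).const_mul m)).congr_deriv
    (by ring)).hasDerivWithinAt

lemma mul_sq_le_taylor (hS : Convex ℝ S) (hF : ∀ t ∈ S, HasDerivAt F (F' t) t)
    (hF' : ∀ t ∈ S, HasDerivAt F' (F'' t) t) (hm : ∀ t ∈ S, m ≤ F'' t) {c x : ℝ}
    (hc : c ∈ S) (hx : x ∈ S) :
    m / 2 * (x - c) ^ 2 ≤ F x - F c - F' c * (x - c) := by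
  have hconv := convexOn_sub_mul_sq hS hF hF' hm
  have hG : HasDerivAt (fun t => F t - m / 2 * t ^ 2) (F' c - m * c) c :=
    (hF c hc).sub (hasDerivAt_div_two_mul_sq m c)
  rcases lt_trichotomy c x with h | rfl | h
  · have := hconv.le_slope_of_hasDerivAt hc hx h hG
    rw [slope_def_field, le_div_iff₀ (sub_pos.2 h)] at this
    linarith
  · simp
  · have := hconv.slope_le_of_hasDerivAt hx hc h hG
    rw [slope_def_field, div_le_iff₀ (sub_pos.2 h)] at this
    linarith

lemma taylor_le_mul_sq (hS : Convex ℝ S) (hF : ∀ t ∈ S, HasDerivAt F (F' t) t)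
    (hF' : ∀ t ∈ S, HasDerivAt F' (F'' t) t) (hM : ∀ t ∈ S, F'' t ≤ M) {c x : ℝ}
    (hc : c ∈ S) (hx : x ∈ S) :
    F x - F c - F' c * (x - c) ≤ M / 2 * (x - c) ^ 2 := by
  have := mul_sq_le_taylor (F := -F) (F' := -F') (F'' := -F'') (m := -M) hS
    (fun t ht => (hF t ht).neg) (fun t ht => (hF' t ht).neg) (fun t ht => neg_le_neg (hM t ht))
    hc hx
  simp only [Pi.neg_apply] at this
  linarith

lemma mul_sub_le_deriv_sub (hS : Convex ℝ S) (hF : ∀ t ∈ S, HasDerivAt F (F' t) t)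
    (hF' : ∀ t ∈ S, HasDerivAt F' (F'' t) t) (hm : ∀ t ∈ S, m ≤ F'' t) {x y : ℝ}
    (hx : x ∈ S) (hy : y ∈ S) (hxy : x ≤ y) :
    m * (y - x) ≤ F' y - F' x := by
  rcases hxy.eq_or_lt with rfl | hxy
  · simp
  have h1 := mul_sq_le_taylor hS hF hF' hm hx hy
  have h2 := mul_sq_le_taylor hS hF hF' hm hy hx
  have : m * (y - x) * (y - x) ≤ (F' y - F' x) * (y - x) := by linarith
  exact le_of_mul_le_mul_right this (sub_pos.2 hxy)

lemma abs_secantSlope_sub_deriv_midpoint_le (hS : Convex ℝ S)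
    (hF : ∀ t ∈ S, HasDerivAt F (F' t) t) (hF' : ∀ t ∈ S, HasDerivAt F' (F'' t) t)
    (hm : ∀ t ∈ S, m ≤ F'' t) (hM : ∀ t ∈ S, F'' t ≤ M) {u v : ℝ} (hu : u ∈ S) (hv : v ∈ S) :
    |secantSlope F F' u v - F' ((u + v) / 2)| ≤ (M - m) / 8 * |v - u| := by
  wlog huv : u ≤ v generalizing u v
  · rw [secantSlope_comm, add_comm u v, abs_sub_comm v u]
    exact this hv hu (le_of_not_ge huv)
  rcases huv.eq_or_lt with rfl | huv
  · simp [secantSlope]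
  have hc := hS.add_div_two_mem hu hv
  have hvu : 0 < v - u := sub_pos.2 huv
  have hlo_u := mul_sq_le_taylor hS hF hF' hm hc hu
  have hlo_v := mul_sq_le_taylor hS hF hF' hm hc hv
  have hhi_u := taylor_le_mul_sq hS hF hF' hM hc hu
  have hhi_v := taylor_le_mul_sq hS hF hF' hM hc hv
  have hnum :
      |F v - F u - (v - u) * F' ((u + v) / 2)| ≤ (M - m) / 8 * (v - u) * (v - u) := by
    rw [abs_le]; constructor <;> linarith
  rwa [secantSlope, if_neg huv.ne, slope_def_field, abs_of_pos hvu, div_sub' hvu.ne', abs_div,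
    abs_of_pos hvu, div_le_iff₀ hvu]

lemma secantSlope_le_secantSlope (hS : Convex ℝ S)
    (hF : ∀ t ∈ S, HasDerivAt F (F' t) t) (hF' : ∀ t ∈ S, HasDerivAt F' (F'' t) t)
    (hm : ∀ t ∈ S, m ≤ F'' t) (hM : ∀ t ∈ S, F'' t ≤ M) {u v u' v' : ℝ}
    (hu : u ∈ S) (hv : v ∈ S) (hu' : u' ∈ S) (hv' : v' ∈ S)
    (hmid : (u + v) / 2 ≤ (u' + v') / 2)
    (hgap : (M - m) / 8 * (|v - u| + |v' - u'|) ≤ m * ((u' + v') / 2 - (u + v) / 2)) :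
    secantSlope F F' u v ≤ secantSlope F F' u' v' := by
  have e := (abs_le.1 (abs_secantSlope_sub_deriv_midpoint_le hS hF hF' hm hM hu hv)).2
  have e' := (abs_le.1 (abs_secantSlope_sub_deriv_midpoint_le hS hF hF' hm hM hu' hv')).1
  have hd := mul_sub_le_deriv_sub hS hF hF' hm (hS.add_div_two_mem hu hv)
    (hS.add_div_two_mem hu' hv') hmid
  linarith

end SecondDerivativeBounds

section LogSumExp

variable {ι : Type*} [Fintype ι] (w η : ι → ℝ)

noncomputable def momentSum (k : ℕ) (t : ℝ) : ℝ := ∑ i, w i * η i ^ k * exp (t * η i)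

noncomputable def logSumExp (t : ℝ) : ℝ := log (momentSum w η 0 t)

noncomputable def tiltedMean (t : ℝ) : ℝ := momentSum w η 1 t / momentSum w η 0 t

noncomputable def tiltedVariance (t : ℝ) : ℝ :=
  momentSum w η 2 t / momentSum w η 0 t - tiltedMean w η t ^ 2

lemma hasDerivAt_momentSum (k : ℕ) (t : ℝ) :
    HasDerivAt (momentSum w η k) (momentSum w η (k + 1) t) t := by
  unfold momentSum
  refine HasDerivAt.fun_sum fun i _ => ?_
  exact ((((hasDerivAt_id t).mul_const (η i)).exp).const_mul (w i * η i ^ k)).congr_deriv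
    (by simp only [id_eq, one_mul]; ring)

variable {w η}

lemma momentSum_zero_pos [Nonempty ι] (hw : ∀ i, 0 < w i) (t : ℝ) : 0 < momentSum w η 0 t :=
  Finset.sum_pos (fun i _ => by simpa using mul_pos (hw i) (exp_pos _)) Finset.univ_nonempty

lemma hasDerivAt_logSumExp [Nonempty ι] (hw : ∀ i, 0 < w i) (t : ℝ) :
    HasDerivAt (logSumExp w η) (tiltedMean w η t) t :=
  (hasDerivAt_momentSum w η 0 t).log (momentSum_zero_pos hw t).ne'

lemma hasDerivAt_tiltedMean [Nonempty ι] (hw : ∀ i, 0 < w i) (t : ℝ) :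
    HasDerivAt (tiltedMean w η) (tiltedVariance w η t) t := by
  have h0 := (momentSum_zero_pos (η := η) hw t).ne'
  refine ((hasDerivAt_momentSum w η 1 t).div (hasDerivAt_momentSum w η 0 t) h0).congr_deriv ?_
  unfold tiltedVariance tiltedMean
  field_simp

lemma tiltedVariance_eq_sum_sum_div (t : ℝ) :
    tiltedVariance w η t =
      (∑ i, ∑ j, w i * w j * exp (t * η i) * exp (t * η j) * (η i - η j) ^ 2) /
        (2 * momentSum w η 0 t ^ 2) := by
  have hexpand : ∀ i j, w i * w j * exp (t * η i) * exp (t * η j) * (η i - η j) ^ 2 =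
      (w i * η i ^ 2 * exp (t * η i)) * (w j * η j ^ 0 * exp (t * η j)) +
      (w i * η i ^ 0 * exp (t * η i)) * (w j * η j ^ 2 * exp (t * η j)) -
      2 * ((w i * η i ^ 1 * exp (t * η i)) * (w j * η j ^ 1 * exp (t * η j))) := by
    intro i j; ring
  simp_rw [hexpand, Finset.sum_sub_distrib, Finset.sum_add_distrib, ← Finset.mul_sum,
    ← Finset.sum_mul]
  change _ = (momentSum w η 2 t * momentSum w η 0 t + momentSum w η 0 t * momentSum w η 2 t -
    2 * (momentSum w η 1 t * momentSum w η 1 t)) / _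
  unfold tiltedVariance tiltedMean
  rcases eq_or_ne (momentSum w η 0 t) 0 with h0 | h0
  · simp [h0]
  · field_simp
    ring

lemma sum_sum_mul_exp_mul_sq_sub_nonneg (hw : ∀ i, 0 ≤ w i) (t : ℝ) :
    0 ≤ ∑ i, ∑ j, w i * w j * exp (t * η i) * exp (t * η j) * (η i - η j) ^ 2 := by
  refine Finset.sum_nonneg fun i _ => Finset.sum_nonneg fun j _ => ?_
  have := hw i
  have := hw j
  positivity

lemma tiltedVariance_nonneg (hw : ∀ i, 0 ≤ w i) (t : ℝ) : 0 ≤ tiltedVariance w η t := by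
  rw [tiltedVariance_eq_sum_sum_div]
  exact div_nonneg (sum_sum_mul_exp_mul_sq_sub_nonneg hw t) (by positivity)

lemma tiltedMean_mem_Icc [Nonempty ι] (hw : ∀ i, 0 < w i) {lo hi : ℝ}
    (hη : ∀ i, η i ∈ Icc lo hi) (t : ℝ) : tiltedMean w η t ∈ Icc lo hi := by
  have h0 := momentSum_zero_pos (η := η) hw t
  rw [tiltedMean, mem_Icc, le_div_iff₀ h0, div_le_iff₀ h0]
  unfold momentSum
  rw [Finset.mul_sum, Finset.mul_sum]
  have hpos : ∀ i, 0 < w i * exp (t * η i) := fun i => mul_pos (hw i) (exp_pos _)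
  constructor <;> refine Finset.sum_le_sum fun i _ => ?_ <;>
    simp only [pow_zero, pow_one, mul_one]
  · nlinarith [hpos i, (hη i).1]
  · nlinarith [hpos i, (hη i).2]

lemma exp_mul_le_of_mem_Icc {ε y : ℝ} (hy : y ∈ Icc 0 ε) (s t : ℝ) :
    exp (s * y) ≤ exp (ε * |s - t|) * exp (t * y) := by
  rw [← exp_add, exp_le_exp]
  have : (s - t) * y ≤ |s - t| * ε := mul_le_mul (le_abs_self _) hy.2 hy.1 (abs_nonneg _)
  linarith

lemma momentSum_zero_le (hw : ∀ i, 0 ≤ w i) {ε : ℝ} (hη : ∀ i, η i ∈ Icc 0 ε) (s t : ℝ) :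
    momentSum w η 0 s ≤ exp (ε * |s - t|) * momentSum w η 0 t := by
  unfold momentSum
  rw [Finset.mul_sum]
  refine Finset.sum_le_sum fun i _ => ?_
  simp only [pow_zero, mul_one, mul_left_comm _ (w i)]
  exact mul_le_mul_of_nonneg_left (exp_mul_le_of_mem_Icc (hη i) s t) (hw i)

lemma tiltedVariance_le [Nonempty ι] (hw : ∀ i, 0 < w i) {ε : ℝ} (hη : ∀ i, η i ∈ Icc 0 ε)
    (s t : ℝ) : tiltedVariance w η s ≤ exp (4 * (ε * |s - t|)) * tiltedVariance w η t := by
  set K := exp (ε * |s - t|)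
  have hK : 0 < K := exp_pos _
  have hS : momentSum w η 0 t / K ≤ momentSum w η 0 s := by
    rw [div_le_iff₀ hK, mul_comm]
    simpa [K, abs_sub_comm] using momentSum_zero_le (fun i => (hw i).le) hη t s
  have hN : ∑ i, ∑ j, w i * w j * exp (s * η i) * exp (s * η j) * (η i - η j) ^ 2 ≤
      K ^ 2 * ∑ i, ∑ j, w i * w j * exp (t * η i) * exp (t * η j) * (η i - η j) ^ 2 := by
    simp_rw [Finset.mul_sum]
    refine Finset.sum_le_sum fun i _ => Finset.sum_le_sum fun j _ => ?_
    have hij : exp (s * η i) * exp (s * η j) ≤ K * exp (t * η i) * (K * exp (t * η j)) :=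
      mul_le_mul (exp_mul_le_of_mem_Icc (hη i) s t) (exp_mul_le_of_mem_Icc (hη j) s t)
        (exp_pos _).le (by positivity)
    have hc : 0 ≤ w i * w j * (η i - η j) ^ 2 := by
      have := (hw i).le
      have := (hw j).le
      positivity
    nlinarith
  have hSt := momentSum_zero_pos (η := η) hw t
  rw [tiltedVariance_eq_sum_sum_div, tiltedVariance_eq_sum_sum_div]
  calc _ ≤ K ^ 2 * (∑ i, ∑ j, w i * w j * exp (t * η i) * exp (t * η j) * (η i - η j) ^ 2) /
        (2 * (momentSum w η 0 t / K) ^ 2) := by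
        have := sum_sum_mul_exp_mul_sq_sub_nonneg (η := η) (fun i => (hw i).le) t
        gcongr
    _ = _ := by
        rw [show (4 : ℝ) = (4 : ℕ) by norm_num, exp_nat_mul]
        simp only [K]
        field_simp

lemma logSumExp_secantSlope_le [Nonempty ι] (hw : ∀ i, 0 < w i) {ε R : ℝ}
    (hη : ∀ i, η i ∈ Icc 0 ε) {u v u' v' : ℝ} (hu : u ∈ Icc (-R) R) (hv : v ∈ Icc (-R) R)
    (hu' : u' ∈ Icc (-R) R) (hv' : v' ∈ Icc (-R) R) (hmid : (u + v) / 2 ≤ (u' + v') / 2)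
    (hgap : (exp (16 * R * ε) - 1) * (|v - u| + |v' - u'|) ≤
      8 * ((u' + v') / 2 - (u + v) / 2)) :
    secantSlope (logSumExp w η) (tiltedMean w η) u v ≤
      secantSlope (logSumExp w η) (tiltedMean w η) u' v' := by
  obtain ⟨i⟩ := ‹Nonempty ι›
  have hε : 0 ≤ ε := (hη i).1.trans (hη i).2
  set c := (u + v) / 2
  have hc : c ∈ Icc (-R) R := (convex_Icc _ _).add_div_two_mem hu hv
  set K := exp (8 * R * ε)
  have hK : 0 < K := exp_pos _
  have hKt : ∀ t ∈ Icc (-R) R, exp (4 * (ε * |t - c|)) ≤ K := fun t ht => by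
    rw [exp_le_exp]
    have : |t - c| ≤ 2 * R := by
      rw [abs_le]; constructor <;> linarith [ht.1, ht.2, hc.1, hc.2]
    nlinarith
  set P := tiltedVariance w η c
  have hP : 0 ≤ P := tiltedVariance_nonneg (fun i => (hw i).le) c
  have hhi : ∀ t ∈ Icc (-R) R, tiltedVariance w η t ≤ K * P := fun t ht =>
    (tiltedVariance_le hw hη t c).trans (mul_le_mul_of_nonneg_right (hKt t ht) hP)
  have hlo : ∀ t ∈ Icc (-R) R, P / K ≤ tiltedVariance w η t := fun t ht => by
    rw [div_le_iff₀ hK, mul_comm]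
    have := tiltedVariance_le hw hη c t
    rw [abs_sub_comm] at this
    exact this.trans (mul_le_mul_of_nonneg_right (hKt t ht)
      (tiltedVariance_nonneg (fun i => (hw i).le) t))
  refine secantSlope_le_secantSlope (convex_Icc _ _) (fun t _ => hasDerivAt_logSumExp hw t)
    (fun t _ => hasDerivAt_tiltedMean hw t) hlo hhi hu hv hu' hv' hmid ?_
  have hK2 : exp (16 * R * ε) = K ^ 2 := by rw [sq, ← exp_add]; ring_nf
  rw [hK2] at hgap
  calc (K * P - P / K) / 8 * (|v - u| + |v' - u'|)
      = P / K * ((K ^ 2 - 1) * (|v - u| + |v' - u'|) / 8) := by field_simp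
    _ ≤ P / K * ((u' + v') / 2 - c) := by gcongr; linarith

end LogSumExp

lemma exists_pos_exp_mul_sub_one_mul_le (c C : ℝ) {D : ℝ} (hD : 0 < D) :
    ∃ ε > 0, (exp (c * ε) - 1) * C ≤ D := by
  have hcont : ContinuousAt (fun ε => (exp (c * ε) - 1) * C) 0 := by fun_prop
  have hev := hcont.eventually
    (gt_mem_nhds (show (exp (c * 0) - 1) * C < D by simpa using hD))
  obtain ⟨ε, hε, hε'⟩ := ((hev.filter_mono nhdsWithin_le_nhds).and self_mem_nhdsWithin).exists
    (f := nhdsWithin (0 : ℝ) (Ioi 0))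
  exact ⟨ε, hε', hε.le⟩

section PowerWeights

noncomputable def powOrLog (a y : ℝ) : ℝ := if a = 0 then log y else y ^ a

lemma powOrLog_injOn (a : ℝ) : InjOn (powOrLog a) (Ioi 0) := by
  unfold powOrLog
  split_ifs with ha
  · exact log_injOn_pos
  · exact (rpow_left_injOn ha).mono fun y (hy : 0 < y) => hy.le

variable {ι : Type*} [Fintype ι] [Nonempty ι] {w η x : ι → ℝ} {X : ℝ}

lemma powOrLog_mul_exp_secantSlope (hw : ∀ i, 0 < w i) (hX : 0 < X)
    (hx : ∀ i, x i = X * exp (η i)) (a θ : ℝ) :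
    powOrLog a (X * exp (secantSlope (logSumExp w η) (tiltedMean w η) θ (θ + a))) =
      (∑ i, w i * x i ^ θ * powOrLog a (x i)) / ∑ i, w i * x i ^ θ := by
  have hrpow : ∀ t i, x i ^ t = X ^ t * exp (t * η i) := fun t i => by
    rw [hx, mul_rpow hX.le (exp_pos _).le, ← exp_mul, mul_comm (η i)]
  have hsum : ∀ t, ∑ i, w i * x i ^ t = X ^ t * momentSum w η 0 t := fun t => by
    simp only [momentSum, hrpow, Finset.mul_sum]
    exact Finset.sum_congr rfl fun i _ => by ring
  have hS := momentSum_zero_pos (η := η) hw θ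
  have hXθ := rpow_pos_of_pos hX θ
  unfold powOrLog
  split_ifs with ha
  · have hnum : ∑ i, w i * x i ^ θ * log (x i) =
        X ^ θ * (log X * momentSum w η 0 θ + momentSum w η 1 θ) := by
      simp only [hrpow]
      simp only [momentSum, hx, log_mul hX.ne' (exp_ne_zero _), log_exp, Finset.mul_sum,
        ← Finset.sum_add_distrib]
      exact Finset.sum_congr rfl fun i _ => by ring
    rw [secantSlope, if_pos (by rw [ha, add_zero]), hnum, hsum,
      log_mul hX.ne' (exp_ne_zero _), log_exp, tiltedMean]
    field_simp
  · have hnum : ∑ i, w i * x i ^ θ * x i ^ a = X ^ θ * (X ^ a * momentSum w η 0 (θ + a)) := by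
      have hxpos : ∀ i, 0 < x i := fun i => by rw [hx]; positivity
      simp only [mul_assoc, ← rpow_add (hxpos _)]
      rw [hsum, rpow_add hX, mul_assoc]
    rw [secantSlope, if_neg (by simpa using ha), slope_def_field, add_sub_cancel_left, logSumExp,
      logSumExp, hnum, hsum, mul_rpow hX.le (exp_pos _).le, ← exp_mul,
      div_mul_cancel₀ _ ha, exp_sub, exp_log hS, exp_log (momentSum_zero_pos hw _)]
    field_simp

lemma bajMean_eq_of_apply_eq {n : ℕ} {I : Set ℝ} {f : ℝ → ℝ} {p : Fin n → ℝ → ℝ}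
    {x : Fin n → ℝ} {z : ℝ} (hf : InjOn f I) (hz : z ∈ I)
    (h : f z = (∑ i, p i (x i) * f (x i)) / ∑ i, p i (x i)) : bajMean I f p x = z := by
  rw [bajMean, ← h]
  exact hf.leftInvOn_invFunOn hz

lemma bajMean_powOrLog_eq {n : ℕ} [Nonempty (Fin n)] {I : Set ℝ} (hIconn : I.OrdConnected)
    (hIpos : I ⊆ Ioi 0) {x η w : Fin n → ℝ} (hx : ∀ i, x i ∈ I)
    (hxη : ∀ i, x i = X * exp (η i))
    (hw : ∀ i, 0 < w i) {p : Fin n → ℝ → ℝ} {c θ : ℝ} (hc : c ≠ 0)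
    (hp : ∀ i, p i (x i) = c * (w i * x i ^ θ)) (a : ℝ) :
    bajMean I (powOrLog a) p x =
      X * exp (secantSlope (logSumExp w η) (tiltedMean w η) θ (θ + a)) := by
  obtain ⟨i₀⟩ := ‹Nonempty (Fin n)›
  have hX : 0 < X := by
    have := hIpos (hx i₀)
    rw [hxη] at this
    exact pos_of_mul_pos_left this (exp_pos _).le
  obtain ⟨imin, himin⟩ := Finite.exists_min x
  obtain ⟨imax, himax⟩ := Finite.exists_max x
  have hη : ∀ i, η i ∈ Icc (η imin) (η imax) := fun i => by
    have h1 := himin i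
    have h2 := himax i
    simp only [hxη, mul_le_mul_iff_right₀ hX, exp_le_exp] at h1 h2
    exact ⟨h1, h2⟩
  have hσ := secantSlope_mem_Icc (hasDerivAt_logSumExp hw) (tiltedMean_mem_Icc hw hη) θ (θ + a)
  refine bajMean_eq_of_apply_eq ((powOrLog_injOn a).mono hIpos)
    (hIconn.out (hx imin) (hx imax) ?_) ?_
  · rw [hxη, hxη]
    exact ⟨by gcongr; exact hσ.1, by gcongr; exact hσ.2⟩
  · simp only [hp, mul_assoc c, ← Finset.mul_sum]
    rw [mul_div_mul_left _ _ hc, powOrLog_mul_exp_secantSlope hw hX hxη]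

end PowerWeights

section NearDiagonal

variable {ι : Type*} {I : Set ℝ} {ε : ℝ}

def nearDiagonal (I : Set ℝ) (ε : ℝ) : Set (ι → ℝ) :=
  {x | (∀ i, x i ∈ I) ∧ ∀ i j, x i < exp ε * x j}

lemma isOpen_nearDiagonal [Finite ι] (hI : IsOpen I) (ε : ℝ) :
    IsOpen (nearDiagonal I ε : Set (ι → ℝ)) := by
  simp only [nearDiagonal, ofPred_and, ofPred_forall]
  exact (isOpen_iInter_of_finite fun i => hI.preimage (continuous_apply i)).inter
    (isOpen_iInter_of_finite fun i => isOpen_iInter_of_finite fun j =>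
      isOpen_lt (continuous_apply i) (continuous_const.mul (continuous_apply j)))

lemma const_mem_nearDiagonal {t : ℝ} (ht : t ∈ I) (ht0 : 0 < t) (hε : 0 < ε) :
    (fun _ => t) ∈ (nearDiagonal I ε : Set (ι → ℝ)) :=
  ⟨fun _ => ht, fun _ _ => lt_mul_left ht0 (one_lt_exp_iff.2 hε)⟩

lemma log_sub_log_mem_Icc_of_mem_nearDiagonal (hIpos : I ⊆ Ioi 0) {x : ι → ℝ}
    (hx : x ∈ nearDiagonal I ε) {k : ι} (hk : ∀ i, x k ≤ x i) (i : ι) :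
    log (x i) - log (x k) ∈ Icc 0 ε := by
  have hxpos : ∀ i, 0 < x i := fun i => hIpos (hx.1 i)
  refine ⟨sub_nonneg.2 (log_le_log (hxpos k) (hk i)), ?_⟩
  have := log_lt_log (hxpos i) (hx.2 i k)
  rw [log_mul (exp_ne_zero _) (hxpos k).ne', log_exp] at this
  linarith

end NearDiagonal

theorem stmt12_general {n : ℕ} (hn : 2 ≤ n) (I : Set ℝ) (hIopen : IsOpen I)
    (hIconn : I.OrdConnected) (hIpos : I ⊆ Set.Ioi (0 : ℝ))
    (a b : ℝ)
    (lam mu : Fin n → ℝ) (al be : Fin n → ℝ)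
    (hlam : ∀ i, 0 < lam i)
    (γ δ : ℝ) (hγ : 0 < γ)
    (hrel : ∀ i : Fin n, mu i = γ * lam i ∧ be i = al i + δ)
    (hab : a < b + 2 * δ) :
    LocallySmaller I
      (bajMean I (fun x => if a = 0 then Real.log x else x ^ a)
        (fun i x => lam i * x ^ al i))
      (bajMean I (fun x => if b = 0 then Real.log x else x ^ b)
        (fun i x => mu i * x ^ be i)) := by
  change LocallySmaller I (bajMean I (powOrLog a) _) (bajMean I (powOrLog b) _)
  have : Nonempty (Fin n) := ⟨⟨0, by omega⟩⟩
  set R := |a| + |b| + |δ|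
  have hR : ∀ t, |t| ≤ R → t ∈ Icc (-R) R := fun t ht => abs_le.1 ht
  obtain ⟨ε, hε, hgap⟩ := exists_pos_exp_mul_sub_one_mul_le (16 * R) (|a - 0| + |δ + b - δ|)
    (show 0 < 8 * ((δ + (δ + b)) / 2 - (0 + a) / 2) by linarith)
  refine ⟨nearDiagonal I ε, isOpen_nearDiagonal hIopen ε, fun x hx => hx.1,
    fun t ht => const_mem_nearDiagonal ht (hIpos ht) hε, fun x hx => ?_⟩
  obtain ⟨k, hk⟩ := Finite.exists_min x
  have hxpos : ∀ i, 0 < x i := fun i => hIpos (hx.1 i)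
  set η := fun i => log (x i) - log (x k)
  have hxη : ∀ i, x i = x k * exp (η i) := fun i => by
    rw [exp_sub, exp_log (hxpos i), exp_log (hxpos k), mul_div_cancel₀ _ (hxpos k).ne']
  have hw : ∀ i, 0 < lam i * x i ^ al i := fun i => mul_pos (hlam i) (rpow_pos_of_pos (hxpos i) _)
  rw [bajMean_powOrLog_eq hIconn hIpos hx.1 hxη hw one_ne_zero (θ := 0) (fun i => by simp) a,
    bajMean_powOrLog_eq hIconn hIpos hx.1 hxη hw hγ.ne' (θ := δ)
      (fun i => by rw [(hrel i).1, (hrel i).2, rpow_add (hxpos i)]; ring) b]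
  refine mul_le_mul_of_nonneg_left (exp_le_exp.2 ?_) (hxpos k).le
  rw [zero_add]
  exact logSumExp_secantSlope_le hw (log_sub_log_mem_Icc_of_mem_nearDiagonal hIpos hx hk)
    (hR _ (by rw [abs_zero]; positivity)) (hR _ (by linarith [abs_nonneg b, abs_nonneg δ]))
    (hR _ (by linarith [abs_nonneg a, abs_nonneg b]))
    (hR _ (by linarith [abs_add_le δ b, abs_nonneg a]))
    (by linarith) hgap

/-- Corollary LCpp, sufficiency: with `f(x) = x^a` (`f = log` if `a = 0`),
`g(x) = x^b` (`g = log` if `b = 0`) and power weights `pᵢ(x) = λᵢ x^{αᵢ}`,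
`qᵢ(x) = μᵢ x^{βᵢ}` on `I ⊆ (0,∞)`, if there exist `γ > 0` and `δ ∈ ℝ` such that
`μᵢ = γλᵢ`, `βᵢ = αᵢ + δ` for all `i`, and `a < b + 2δ`, then `A_{f,p}` is locally
smaller than `A_{g,q}`. -/
theorem stmt12 {n : ℕ} (hn : 2 ≤ n) (I : Set ℝ) (hIopen : IsOpen I)
    (hIconn : I.OrdConnected) (hIne : I.Nonempty) (hIpos : I ⊆ Set.Ioi (0 : ℝ))
    (a b : ℝ)
    (lam mu : Fin n → ℝ) (al be : Fin n → ℝ)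
    (hlam : ∀ i, 0 < lam i) (hmu : ∀ i, 0 < mu i)
    (γ δ : ℝ) (hγ : 0 < γ)
    (hrel : ∀ i : Fin n, mu i = γ * lam i ∧ be i = al i + δ)
    (hab : a < b + 2 * δ) :
    LocallySmaller I
      (bajMean I (fun x => if a = 0 then Real.log x else x ^ a)
        (fun i x => lam i * x ^ al i))
      (bajMean I (fun x => if b = 0 then Real.log x else x ^ b)
        (fun i x => mu i * x ^ be i)) :=
  stmt12_general hn I hIopen hIconn hIpos a b lam mu al be hlam γ δ hγ hrel hab
end

section
/- Let f, g : I → ℝ be strictly monotone differentiable functions with nowhere vanishing first derivatives and p, q : I → ℝ_+^n. Assume that p_i/p_0 = q_i/q_0 on I for every i ∈ {1,…,n} and that p_0(x)(f(x) − f(y)) / (p_0(y) f'(y)) ≤ q_0(x)(g(x) − g(y)) / (q_0(y) g'(y)) for all x, y ∈ I. Then A_{f,p} is globally smaller than A_{g,q}, i.e., A_{f,p}(x_1,…,x_n) ≤ A_{g,q}(x_1,…,x_n) for all x_1,…,x_n ∈ I. -/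
open Set Function Real

/-!
Let `y = A_{g,q}(x)`, so that `∑ qᵢ(xᵢ)(g(xᵢ) - g(y)) = 0`. Multiplying the hypothesis at
`(xᵢ, y)` by the common weight `pᵢ(xᵢ)/p₀(xᵢ) = qᵢ(xᵢ)/q₀(xᵢ)` and summing over `i` gives
`∑ pᵢ(xᵢ)(f(xᵢ) - f(y)) / (p₀(y) f'(y)) ≤ 0`, that is `(f(A_{f,p}(x)) - f(y)) / f'(y) ≤ 0`.
As `f'(y)` has the sign of the monotonicity of `f`, this says `A_{f,p}(x) ≤ y`.
-/

theorem HasDerivAt.pos_of_strictMonoOn {f : ℝ → ℝ} {I : Set ℝ} {y c : ℝ} (hI : IsOpen I)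
    (hf : StrictMonoOn f I) (hy : y ∈ I) (hd : HasDerivAt f c y) (hc : c ≠ 0) : 0 < c :=
  (hd.hasDerivWithinAt.nonneg_of_monotoneOn (hI.preperfect y hy) hf.monotoneOn).lt_of_ne' hc

theorem HasDerivAt.neg_of_strictAntiOn {f : ℝ → ℝ} {I : Set ℝ} {y c : ℝ} (hI : IsOpen I)
    (hf : StrictAntiOn f I) (hy : y ∈ I) (hd : HasDerivAt f c y) (hc : c ≠ 0) : c < 0 :=
  (hd.hasDerivWithinAt.nonpos_of_antitoneOn (hI.preperfect y hy) hf.antitoneOn).lt_of_ne hc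

theorem le_of_sub_div_deriv_nonpos {f : ℝ → ℝ} {I : Set ℝ} {y z c : ℝ} (hI : IsOpen I)
    (hf : StrictMonoOn f I ∨ StrictAntiOn f I) (hz : z ∈ I) (hy : y ∈ I)
    (hd : HasDerivAt f c y) (hc : c ≠ 0) (h : (f z - f y) / c ≤ 0) : z ≤ y := by
  rcases hf with hmono | hanti
  · rw [div_le_iff₀ (hd.pos_of_strictMonoOn hI hmono hy hc), zero_mul, sub_nonpos] at h
    exact (hmono.le_iff_le hz hy).mp h
  · rw [div_le_iff_of_neg (hd.neg_of_strictAntiOn hI hanti hy hc), zero_mul, sub_nonneg] at h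
    exact (hanti.le_iff_ge hy hz).mp h

theorem exists_eq_div_sum_weights {ι : Type*} [Fintype ι] [Nonempty ι] {I : Set ℝ}
    {g : ℝ → ℝ} (hI : I.OrdConnected) (hg : ContinuousOn g I) {w x : ι → ℝ}
    (hw : ∀ i, 0 < w i) (hx : ∀ i, x i ∈ I) :
    ∃ a ∈ I, g a = (∑ i, w i * g (x i)) / ∑ i, w i := by
  have hconv : Convex ℝ (g '' I) := (hI.isPreconnected.image g hg).ordConnected.convex
  have hmem := hconv.centerMass_mem (t := Finset.univ) (fun i _ => (hw i).le)
    (Finset.sum_pos (fun i _ => hw i) Finset.univ_nonempty)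
    (fun i _ => mem_image_of_mem g (hx i))
  simp only [Finset.centerMass, smul_eq_mul, inv_mul_eq_div] at hmem
  obtain ⟨a, ha, hga⟩ := hmem
  exact ⟨a, ha, hga⟩

theorem bajMean_spec {n : ℕ} [Nonempty (Fin n)] {I : Set ℝ} {f : ℝ → ℝ} {p : Fin n → ℝ → ℝ}
    (hI : I.OrdConnected) (hf : ContinuousOn f I) (hp : ∀ i, ∀ t ∈ I, 0 < p i t)
    {x : Fin n → ℝ} (hx : ∀ i, x i ∈ I) :
    bajMean I f p x ∈ I ∧
      f (bajMean I f p x) = (∑ i, p i (x i) * f (x i)) / ∑ i, p i (x i) := by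
  have h := exists_eq_div_sum_weights hI hf (fun i => hp i (x i) (hx i)) hx
  exact ⟨invFunOn_mem h, invFunOn_eq h⟩

theorem Finset.sum_mul_sub_eq {ι : Type*} (s : Finset ι) (w a : ι → ℝ) (c : ℝ)
    (hw : ∑ i ∈ s, w i ≠ 0) :
    ∑ i ∈ s, w i * (a i - c) = (∑ i ∈ s, w i) * ((∑ i ∈ s, w i * a i) / (∑ i ∈ s, w i) - c) := by
  rw [mul_sub, mul_div_cancel₀ _ hw, Finset.sum_mul, ← Finset.sum_sub_distrib]
  simp only [mul_sub]

theorem mul_le_mul_of_div_eq_div {a A b B X Y : ℝ} (hA : 0 < A) (hB : 0 < B) (ha : 0 ≤ a)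
    (hab : a / A = b / B) (h : A * X ≤ B * Y) : a * X ≤ b * Y :=
  calc a * X = a / A * (A * X) := by field_simp
    _ ≤ a / A * (B * Y) := by gcongr
    _ = b * Y := by rw [hab]; field_simp

theorem stmt13_general {n : ℕ} (hn : 1 ≤ n) (I : Set ℝ) (hIopen : IsOpen I)
    (hIconn : I.OrdConnected)
    (f f' g g' : ℝ → ℝ) (p q : Fin n → ℝ → ℝ)
    (hfmono : StrictMonoOn f I ∨ StrictAntiOn f I)
    (hf : ∀ x ∈ I, HasDerivAt f (f' x) x) (hf'0 : ∀ x ∈ I, f' x ≠ 0)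
    (hg : ∀ x ∈ I, HasDerivAt g (g' x) x)
    (hp : ∀ i, ∀ x ∈ I, 0 < p i x) (hq : ∀ i, ∀ x ∈ I, 0 < q i x)
    (hratio : ∀ i : Fin n, ∀ x ∈ I, p i x / (∑ j, p j x) = q i x / (∑ j, q j x))
    (hkey : ∀ x ∈ I, ∀ y ∈ I,
      (∑ j, p j x) * (f x - f y) / ((∑ j, p j y) * f' y) ≤
        (∑ j, q j x) * (g x - g y) / ((∑ j, q j y) * g' y)) :
    ∀ x : Fin n → ℝ, (∀ i, x i ∈ I) → bajMean I f p x ≤ bajMean I g q x := by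
  intro x hx
  have : Nonempty (Fin n) := ⟨⟨0, hn⟩⟩
  have sum_pos {r : Fin n → ℝ → ℝ} (hr : ∀ i, ∀ t ∈ I, 0 < r i t) {y : Fin n → ℝ}
      (hy : ∀ i, y i ∈ I) : 0 < ∑ i, r i (y i) :=
    Finset.sum_pos (fun i _ => hr i (y i) (hy i)) Finset.univ_nonempty
  obtain ⟨hzI, hfz⟩ :=
    bajMean_spec hIconn (fun t ht => (hf t ht).continuousAt.continuousWithinAt) hp hx
  obtain ⟨hyI, hgy⟩ :=
    bajMean_spec hIconn (fun t ht => (hg t ht).continuousAt.continuousWithinAt) hq hx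
  set z := bajMean I f p x
  set y := bajMean I g q x
  have hPy := sum_pos (fun j => hp j) (fun _ => hyI)
  have hsum : ∑ i, p i (x i) * ((f (x i) - f y) / ((∑ j, p j y) * f' y)) ≤
      ∑ i, q i (x i) * ((g (x i) - g y) / ((∑ j, q j y) * g' y)) :=
    Finset.sum_le_sum fun i _ => mul_le_mul_of_div_eq_div
      (sum_pos (fun j => hp j) (fun _ => hx i)) (sum_pos (fun j => hq j) (fun _ => hx i))
      (hp i (x i) (hx i)).le (hratio i (x i) (hx i))
      (by simpa only [mul_div_assoc] using hkey (x i) (hx i) y hyI)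
  simp only [← mul_div_assoc, ← Finset.sum_div] at hsum
  rw [Finset.sum_mul_sub_eq _ _ _ _ (sum_pos hp hx).ne', ← hfz,
    Finset.sum_mul_sub_eq _ _ _ _ (sum_pos hq hx).ne', ← hgy, sub_self, mul_zero,
    zero_div] at hsum
  refine le_of_sub_div_deriv_nonpos hIopen hfmono hzI hyI (hf y hyI) (hf'0 y hyI) ?_
  have hPx := sum_pos hp hx
  calc (f z - f y) / f' y
      = (∑ j, p j y) / (∑ i, p i (x i)) *
          ((∑ i, p i (x i)) * (f z - f y) / ((∑ j, p j y) * f' y)) := by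
        field_simp [hf'0 y hyI, hPy.ne', hPx.ne']
    _ ≤ 0 := mul_nonpos_of_nonneg_of_nonpos (div_nonneg hPy.le hPx.le) hsum

/-- Theorem 2 (global comparison): if `f, g` are strictly monotone differentiable with
nonvanishing first derivatives, `p, q : I → ℝ₊ⁿ`, `pᵢ/p₀ = qᵢ/q₀` on `I` for all `i`,
and `p₀(x)(f(x)-f(y))/(p₀(y)f'(y)) ≤ q₀(x)(g(x)-g(y))/(q₀(y)g'(y))` for all `x, y ∈ I`,
then `A_{f,p}` is globally smaller than `A_{g,q}`. -/
theorem stmt13 {n : ℕ} (hn : 1 ≤ n) (I : Set ℝ) (hIopen : IsOpen I)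
    (hIconn : I.OrdConnected) (hIne : I.Nonempty)
    (f f' g g' : ℝ → ℝ) (p q : Fin n → ℝ → ℝ)
    (hfmono : StrictMonoOn f I ∨ StrictAntiOn f I)
    (hgmono : StrictMonoOn g I ∨ StrictAntiOn g I)
    (hf : ∀ x ∈ I, HasDerivAt f (f' x) x) (hf'0 : ∀ x ∈ I, f' x ≠ 0)
    (hg : ∀ x ∈ I, HasDerivAt g (g' x) x) (hg'0 : ∀ x ∈ I, g' x ≠ 0)
    (hp : ∀ i, ∀ x ∈ I, 0 < p i x) (hq : ∀ i, ∀ x ∈ I, 0 < q i x)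
    (hratio : ∀ i : Fin n, ∀ x ∈ I, p i x / (∑ j, p j x) = q i x / (∑ j, q j x))
    (hkey : ∀ x ∈ I, ∀ y ∈ I,
      (∑ j, p j x) * (f x - f y) / ((∑ j, p j y) * f' y) ≤
        (∑ j, q j x) * (g x - g y) / ((∑ j, q j y) * g' y)) :
    ∀ x : Fin n → ℝ, (∀ i, x i ∈ I) → bajMean I f p x ≤ bajMean I g q x :=
  stmt13_general hn I hIopen hIconn f f' g g' p q hfmono hf hf'0 hg hp hq hratio hkey
end

section
/- Let f, g : I → ℝ be strictly monotone differentiable functions with nowhere vanishing first derivatives and let p_0, q_0 : I → (0,∞). If p_0(x)(f(x) − f(y)) / (p_0(y) f'(y)) ≤ q_0(x)(g(x) − g(y)) / (q_0(y) g'(y)) holds for all x, y ∈ I, then the function x ↦ q_0(x)²|g'(x)| / (p_0(x)²|f'(x)|) is increasing on I. -/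
open Set Function Real Filter Topology

lemma deriv_nonneg_of_monotoneOn' {I : Set ℝ} (hI : IsOpen I) {f : ℝ → ℝ} {d c : ℝ}
    (hc : c ∈ I) (hmono : MonotoneOn f I) (hd : HasDerivAt f d c) : 0 ≤ d := by
  have ht : Tendsto (slope f c) (𝓝[≠] c) (𝓝 d) := hasDerivAt_iff_tendsto_slope.mp hd
  have hI' : ∀ᶠ t in 𝓝[≠] c, t ∈ I :=
    eventually_nhdsWithin_of_eventually_nhds (hI.eventually_mem hc)
  refine ge_of_tendsto ht ?_
  filter_upwards [hI', self_mem_nhdsWithin] with t htI (htne : t ≠ c)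
  rw [slope_def_field]
  rcases lt_or_gt_of_ne htne with h | h
  · exact div_nonneg_of_nonpos (by simpa using hmono htI hc h.le) (by linarith)
  · exact div_nonneg (by simpa using hmono hc htI h.le) (by linarith)

lemma prodneg_aux {I : Set ℝ} (hIopen : IsOpen I) {f f' : ℝ → ℝ}
    (hfmono : StrictMonoOn f I ∨ StrictAntiOn f I)
    (hf : ∀ x ∈ I, HasDerivAt f (f' x) x) (hf'0 : ∀ x ∈ I, f' x ≠ 0)
    {x y : ℝ} (hx : x ∈ I) (hy : y ∈ I) (hxy : x < y) :
    ∀ c ∈ I, (f x - f y) * f' c < 0 := by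
  intro c hc
  rcases hfmono with hm | hm
  · have hu : f x - f y < 0 := sub_neg.2 (hm hx hy hxy)
    have hd : 0 < f' c :=
      lt_of_le_of_ne (deriv_nonneg_of_monotoneOn' hIopen hc hm.monotoneOn (hf c hc))
        (Ne.symm (hf'0 c hc))
    exact mul_neg_of_neg_of_pos hu hd
  · have hu : 0 < f x - f y := sub_pos.2 (hm hx hy hxy)
    have hmono' : MonotoneOn (fun t => -(f t)) I := by
      intro a ha b hb hab
      simp only [neg_le_neg_iff]
      rcases eq_or_lt_of_le hab with rfl | hab
      · exact le_refl _
      · exact (hm ha hb hab).le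
    have hd : 0 ≤ -(f' c) :=
      deriv_nonneg_of_monotoneOn' hIopen hc hmono' ((hf c hc).neg)
    have hd' : f' c < 0 := lt_of_le_of_ne (by linarith) (hf'0 c hc)
    exact mul_neg_of_pos_of_neg hu hd'

lemma rewrite_div_aux {a b u w : ℝ} (ha : 0 < a) (hb : 0 < b) (huw : u * w < 0) :
    a * u / (b * w) = -(a * |u| / (b * |w|)) := by
  rcases lt_or_gt_of_ne (fun h : w = 0 => by simp [h] at huw) with h | h
  · have hu : 0 < u := by nlinarith
    rw [abs_of_pos hu, abs_of_neg h, mul_neg, div_neg, neg_neg]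
  · have hu : u < 0 := by nlinarith
    rw [abs_of_neg hu, abs_of_pos h, mul_neg, neg_div, neg_neg]

/-- Remark 1: if `f, g` are strictly monotone differentiable with nonvanishing first
derivatives, `p₀, q₀ : I → (0,∞)`, and
`p₀(x)(f(x)-f(y))/(p₀(y)f'(y)) ≤ q₀(x)(g(x)-g(y))/(q₀(y)g'(y))` for all `x, y ∈ I`,
then `x ↦ q₀(x)²|g'(x)|/(p₀(x)²|f'(x)|)` is increasing on `I`. -/
theorem stmt14 (I : Set ℝ) (hIopen : IsOpen I)
    (hIconn : I.OrdConnected) (hIne : I.Nonempty)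
    (f f' g g' : ℝ → ℝ) (p₀ q₀ : ℝ → ℝ)
    (hfmono : StrictMonoOn f I ∨ StrictAntiOn f I)
    (hgmono : StrictMonoOn g I ∨ StrictAntiOn g I)
    (hf : ∀ x ∈ I, HasDerivAt f (f' x) x) (hf'0 : ∀ x ∈ I, f' x ≠ 0)
    (hg : ∀ x ∈ I, HasDerivAt g (g' x) x) (hg'0 : ∀ x ∈ I, g' x ≠ 0)
    (hp0 : ∀ x ∈ I, 0 < p₀ x) (hq0 : ∀ x ∈ I, 0 < q₀ x)
    (hkey : ∀ x ∈ I, ∀ y ∈ I,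
      p₀ x * (f x - f y) / (p₀ y * f' y) ≤ q₀ x * (g x - g y) / (q₀ y * g' y)) :
    MonotoneOn (fun x => (q₀ x) ^ 2 * |g' x| / ((p₀ x) ^ 2 * |f' x|)) I := by
  intro x hx y hy hxy
  rcases eq_or_lt_of_le hxy with rfl | hxy
  · exact le_refl _
  have hfneg := prodneg_aux hIopen hfmono hf hf'0 hx hy hxy
  have hgneg := prodneg_aux hIopen hgmono hg hg'0 hx hy hxy
  have hpx := hp0 x hx; have hpy := hp0 y hy
  have hqx := hq0 x hx; have hqy := hq0 y hy
  have hu1 := hfneg x hx; have hu2 := hfneg y hy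
  have hv1 := hgneg x hx; have hv2 := hgneg y hy
  have hune : f x - f y ≠ 0 := fun h => by simp [h] at hu2
  have hvne : g x - g y ≠ 0 := fun h => by simp [h] at hv2
  have hF1 : 0 < |f' x| := abs_pos.2 (hf'0 x hx)
  have hF2 : 0 < |f' y| := abs_pos.2 (hf'0 y hy)
  have hG1 : 0 < |g' x| := abs_pos.2 (hg'0 x hx)
  have hG2 : 0 < |g' y| := abs_pos.2 (hg'0 y hy)
  have h1 := hkey x hx y hy
  have h2 := hkey y hy x hx
  rw [rewrite_div_aux hpx hpy hu2, rewrite_div_aux hqx hqy hv2, neg_le_neg_iff] at h1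
  have e3 : f y - f x = -(f x - f y) := by ring
  have e4 : g y - g x = -(g x - g y) := by ring
  rw [e3, e4, mul_neg, mul_neg, neg_div, neg_div,
    rewrite_div_aux hpy hpx hu1, rewrite_div_aux hqy hqx hv1, neg_neg, neg_neg] at h2
  rw [div_le_div_iff₀ (by positivity) (by positivity)] at h1 h2 ⊢
  have hprod := mul_le_mul h1 h2 (by positivity) (by positivity)
  have huv : 0 < |f x - f y| * |g x - g y| :=
    mul_pos (abs_pos.2 hune) (abs_pos.2 hvne)
  nlinarith [hprod, huv, mul_pos hF1 hF2, mul_pos hG1 hG2]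
end

section
/- Let f, g : I → ℝ be strictly monotone differentiable functions with nowhere vanishing first derivatives and p, q : I → ℝ_+^n. Assume that p_i/p_0 = q_i/q_0 on I for every i ∈ {1,…,n} and that both functions q_0/p_0 and |g'|/|f'| are increasing on I. Then A_{f,p} is globally smaller than A_{g,q}, i.e., A_{f,p}(x_1,…,x_n) ≤ A_{g,q}(x_1,…,x_n) for all x_1,…,x_n ∈ I. -/
open Set Function Real

lemma deriv_nonneg_aux {I : Set ℝ} (hI : IsOpen I) {f : ℝ → ℝ} {x d : ℝ}
    (hx : x ∈ I) (hmono : StrictMonoOn f I) (hd : HasDerivAt f d x) : 0 ≤ d := by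
  have h := hasDerivAt_iff_tendsto_slope.mp hd
  have h2 : Filter.Tendsto (slope f x) (nhdsWithin x (Set.Ioi x)) (nhds d) :=
    h.mono_left (nhdsWithin_mono _ (fun t ht => ne_of_gt ht))
  refine ge_of_tendsto h2 ?_
  have hev : ∀ᶠ t in nhdsWithin x (Set.Ioi x), t ∈ I :=
    Filter.Eventually.filter_mono nhdsWithin_le_nhds (hI.eventually_mem hx)
  filter_upwards [hev, self_mem_nhdsWithin] with t htI htx
  rw [slope_def_field]
  have h1 : f x < f t := hmono hx htI htx
  have h2 : (0:ℝ) < t - x := sub_pos.mpr htx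
  exact div_nonneg (by linarith) (by linarith)

lemma exists_sign_aux {I : Set ℝ} (hIopen : IsOpen I) {g g' : ℝ → ℝ}
    (hgmono : StrictMonoOn g I ∨ StrictAntiOn g I)
    (hg : ∀ x ∈ I, HasDerivAt g (g' x) x) (hg'0 : ∀ x ∈ I, g' x ≠ 0) :
    ∃ ε : ℝ, (ε = 1 ∨ ε = -1) ∧ (∀ t ∈ I, ε * g' t = |g' t|) ∧
      (∀ a ∈ I, ∀ b ∈ I, a < b → ε * g a < ε * g b) := by
  rcases hgmono with hm | hm
  · refine ⟨1, Or.inl rfl, fun t ht => ?_, fun a ha b hb hab => ?_⟩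
    · have h1 : 0 ≤ g' t := deriv_nonneg_aux hIopen ht hm (hg t ht)
      have h2 : 0 < g' t := lt_of_le_of_ne h1 (Ne.symm (hg'0 t ht))
      rw [one_mul, abs_of_pos h2]
    · simpa using hm ha hb hab
  · refine ⟨-1, Or.inr rfl, fun t ht => ?_, fun a ha b hb hab => ?_⟩
    · have hm' : StrictMonoOn (fun u => -g u) I := fun a ha b hb hab =>
        neg_lt_neg (hm ha hb hab)
      have h1 : 0 ≤ -g' t := deriv_nonneg_aux hIopen ht hm' ((hg t ht).neg)
      have h2 : g' t < 0 := lt_of_le_of_ne (by linarith) (hg'0 t ht)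
      rw [abs_of_neg h2]; ring
    · have := hm ha hb hab
      nlinarith

lemma exists_preimage_mean {n : ℕ} (hn : 1 ≤ n) {I : Set ℝ} (hIconn : I.OrdConnected)
    {f : ℝ → ℝ} (hfc : ContinuousOn f I) (x : Fin n → ℝ) (hx : ∀ i, x i ∈ I)
    (w : Fin n → ℝ) (hw : ∀ i, 0 < w i) :
    ∃ c ∈ I, f c = (∑ i, w i * f (x i)) / (∑ i, w i) := by
  haveI : Nonempty (Fin n) := ⟨⟨0, hn⟩⟩
  obtain ⟨i₀, -, hmin⟩ := Finset.exists_min_image Finset.univ (fun i => f (x i))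
    Finset.univ_nonempty
  obtain ⟨i₁, -, hmax⟩ := Finset.exists_max_image Finset.univ (fun i => f (x i))
    Finset.univ_nonempty
  set S : ℝ := ∑ i, w i with hS
  have hSpos : 0 < S := Finset.sum_pos (fun i _ => hw i) Finset.univ_nonempty
  set v : ℝ := (∑ i, w i * f (x i)) / S with hv
  have hlo : f (x i₀) ≤ v := by
    rw [hv, le_div_iff₀ hSpos, hS, Finset.mul_sum]
    refine Finset.sum_le_sum (fun i _ => ?_)
    have := hmin i (Finset.mem_univ i)
    nlinarith [hw i]
  have hhi : v ≤ f (x i₁) := by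
    rw [hv, div_le_iff₀ hSpos, hS, Finset.mul_sum]
    refine Finset.sum_le_sum (fun i _ => ?_)
    have := hmax i (Finset.mem_univ i)
    nlinarith [hw i]
  have hsub : Set.uIcc (x i₀) (x i₁) ⊆ I := hIconn.uIcc_subset (hx i₀) (hx i₁)
  have hivt := intermediate_value_uIcc (hfc.mono hsub)
  have hvmem : v ∈ Set.uIcc (f (x i₀)) (f (x i₁)) := by
    rw [Set.uIcc_of_le (le_trans hlo hhi)]
    exact ⟨hlo, hhi⟩
  obtain ⟨c, hc, hfc'⟩ := hivt hvmem
  exact ⟨c, hsub hc, hfc'⟩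

lemma tangent_ineq {I : Set ℝ} (hIopen : IsOpen I) (hIconn : I.OrdConnected)
    {f f' g g' : ℝ → ℝ}
    (hf : ∀ x ∈ I, HasDerivAt f (f' x) x) (hg : ∀ x ∈ I, HasDerivAt g (g' x) x)
    (hmono2 : MonotoneOn (fun x => |g' x| / |f' x|) I)
    {ε εf : ℝ} (hεg : ∀ t ∈ I, ε * g' t = |g' t|) (hεf : ∀ t ∈ I, εf * f' t = |f' t|)
    (hεf1 : εf = 1 ∨ εf = -1) (hf'0 : ∀ x ∈ I, f' x ≠ 0)
    {y : ℝ} (hy : y ∈ I) {t : ℝ} (ht : t ∈ I) :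
    ε * (g' y / f' y) * (f t - f y) ≤ ε * (g t - g y) := by
  set c : ℝ := g' y / f' y with hc
  set H : ℝ → ℝ := fun u => ε * (g u - g y - c * (f u - f y)) with hH
  have hHy : H y = 0 := by simp [hH]
  have hHd : ∀ u ∈ I, HasDerivAt H (ε * (g' u - c * f' u)) u := by
    intro u hu
    have h1 := ((hg u hu).sub_const (g y)).sub (((hf u hu).sub_const (f y)).const_mul c)
    exact (h1.const_mul ε)
  have hεfsq : εf * εf = 1 := by rcases hεf1 with h | h <;> rw [h] <;> norm_num
  have hderiv : ∀ u ∈ I, ε * (g' u - c * f' u) = |f' u| * (|g' u| / |f' u| - |g' y| / |f' y|) := by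
    intro u hu
    have hfu : f' u = εf * |f' u| := by
      have h := hεf u hu; linear_combination εf * h - f' u * hεfsq
    have hfy' : f' y = εf * |f' y| := by
      have h := hεf y hy; linear_combination εf * h - f' y * hεfsq
    have hfu0 : |f' u| ≠ 0 := abs_ne_zero.mpr (hf'0 u hu)
    have hfy0 : |f' y| ≠ 0 := abs_ne_zero.mpr (hf'0 y hy)
    have hεgu := hεg u hu
    have hεgy := hεg y hy
    have hεfne : εf ≠ 0 := by rcases hεf1 with h | h <;> rw [h] <;> norm_num
    have hfrac : f' u / f' y = |f' u| / |f' y| := by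
      rw [div_eq_div_iff (hf'0 y hy) hfy0]
      linear_combination |f' y| * hfu - |f' u| * hfy'
    have lhs : ε * (g' u - c * f' u) = ε * g' u - (ε * g' y) * (f' u / f' y) := by
      rw [hc]; field_simp
    rw [lhs, hεgu, hεgy, hfrac]
    field_simp
  have hIconv : Convex ℝ I := by
    rw [convex_iff_ordConnected]; exact hIconn
  have hcont : ContinuousOn H I := fun u hu => ((hHd u hu).continuousAt).continuousWithinAt
  -- On I ∩ Iic y, H is antitone
  have hH1 : AntitoneOn H (I ∩ Set.Iic y) := by
    apply antitoneOn_of_deriv_nonpos (hIconv.inter (convex_Iic y))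
      (hcont.mono (Set.inter_subset_left))
    · intro u hu
      have hu' : u ∈ I ∩ Set.Iic y := interior_subset hu
      exact ((hHd u hu'.1).differentiableAt).differentiableWithinAt
    · intro u hu
      have hu' : u ∈ I ∩ Set.Iic y := interior_subset hu
      rw [(hHd u hu'.1).deriv, hderiv u hu'.1]
      have hs : |g' u| / |f' u| ≤ |g' y| / |f' y| := hmono2 hu'.1 hy hu'.2
      have : (0:ℝ) ≤ |f' u| := abs_nonneg _
      nlinarith
  have hH2 : MonotoneOn H (I ∩ Set.Ici y) := by
    apply monotoneOn_of_deriv_nonneg (hIconv.inter (convex_Ici y))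
      (hcont.mono (Set.inter_subset_left))
    · intro u hu
      have hu' : u ∈ I ∩ Set.Ici y := interior_subset hu
      exact ((hHd u hu'.1).differentiableAt).differentiableWithinAt
    · intro u hu
      have hu' : u ∈ I ∩ Set.Ici y := interior_subset hu
      rw [(hHd u hu'.1).deriv, hderiv u hu'.1]
      have hs : |g' y| / |f' y| ≤ |g' u| / |f' u| := hmono2 hy hu'.1 hu'.2
      have : (0:ℝ) ≤ |f' u| := abs_nonneg _
      nlinarith
  have hHt : 0 ≤ H t := by
    rcases le_total t y with h | h
    · have := hH1 ⟨ht, h⟩ ⟨hy, le_refl y⟩ h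
      rw [hHy] at this; exact this
    · have := hH2 ⟨hy, le_refl y⟩ ⟨ht, h⟩ h
      rw [hHy] at this; exact this
  have hexp : H t = ε * (g t - g y) - ε * c * (f t - f y) := by rw [hH]; ring
  linarith [hexp ▸ hHt]

/-- Theorem 2+: if `f, g` are strictly monotone differentiable with nonvanishing first
derivatives, `p, q : I → ℝ₊ⁿ`, `pᵢ/p₀ = qᵢ/q₀` on `I` for all `i`, and both `q₀/p₀`
and `|g'|/|f'|` are increasing on `I`, then `A_{f,p}` is globally smaller than
`A_{g,q}`. -/
theorem stmt15 {n : ℕ} (hn : 1 ≤ n) (I : Set ℝ) (hIopen : IsOpen I)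
    (hIconn : I.OrdConnected) (hIne : I.Nonempty)
    (f f' g g' : ℝ → ℝ) (p q : Fin n → ℝ → ℝ)
    (hfmono : StrictMonoOn f I ∨ StrictAntiOn f I)
    (hgmono : StrictMonoOn g I ∨ StrictAntiOn g I)
    (hf : ∀ x ∈ I, HasDerivAt f (f' x) x) (hf'0 : ∀ x ∈ I, f' x ≠ 0)
    (hg : ∀ x ∈ I, HasDerivAt g (g' x) x) (hg'0 : ∀ x ∈ I, g' x ≠ 0)
    (hp : ∀ i, ∀ x ∈ I, 0 < p i x) (hq : ∀ i, ∀ x ∈ I, 0 < q i x)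
    (hratio : ∀ i : Fin n, ∀ x ∈ I, p i x / (∑ j, p j x) = q i x / (∑ j, q j x))
    (hmono1 : MonotoneOn (fun x => (∑ j, q j x) / (∑ j, p j x)) I)
    (hmono2 : MonotoneOn (fun x => |g' x| / |f' x|) I) :
    ∀ x : Fin n → ℝ, (∀ i, x i ∈ I) → bajMean I f p x ≤ bajMean I g q x := by
  intro x hx
  haveI : Nonempty (Fin n) := ⟨⟨0, hn⟩⟩
  obtain ⟨ε, hε1, hεg', hεgm⟩ := exists_sign_aux hIopen hgmono hg hg'0
  obtain ⟨εf, hεf1, hεf', -⟩ := exists_sign_aux hIopen hfmono hf hf'0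
  set w : Fin n → ℝ := fun i => p i (x i) with hwdef
  set u : Fin n → ℝ := fun i => q i (x i) with hudef
  have hw : ∀ i, 0 < w i := fun i => hp i _ (hx i)
  have hu : ∀ i, 0 < u i := fun i => hq i _ (hx i)
  have hcontf : ContinuousOn f I := fun t ht => ((hf t ht).continuousAt).continuousWithinAt
  have hcontg : ContinuousOn g I := fun t ht => ((hg t ht).continuousAt).continuousWithinAt
  -- positivity of p0, q0
  set P : ℝ → ℝ := fun t => ∑ j, p j t with hPdef
  set Q : ℝ → ℝ := fun t => ∑ j, q j t with hQdef
  have hP : ∀ t ∈ I, 0 < P t := fun t ht =>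
    Finset.sum_pos (fun j _ => hp j t ht) Finset.univ_nonempty
  have hQ : ∀ t ∈ I, 0 < Q t := fun t ht =>
    Finset.sum_pos (fun j _ => hq j t ht) Finset.univ_nonempty
  set r : ℝ → ℝ := fun t => Q t / P t with hrdef
  have hr : ∀ t ∈ I, 0 < r t := fun t ht => div_pos (hQ t ht) (hP t ht)
  have hrmono : MonotoneOn r I := hmono1
  -- u i = w i * r (x i)
  have hurel : ∀ i, u i = w i * r (x i) := by
    intro i
    have h := hratio i (x i) (hx i)
    have hPi := hP (x i) (hx i)
    have hQi := hQ (x i) (hx i)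
    rw [div_eq_div_iff hPi.ne' hQi.ne'] at h
    rw [hudef, hwdef, hrdef]
    field_simp
    linarith [h]
  -- the f-side mean point
  set Sw : ℝ := ∑ i, w i with hSw
  have hSwpos : 0 < Sw := Finset.sum_pos (fun i _ => hw i) Finset.univ_nonempty
  set vf : ℝ := (∑ i, w i * f (x i)) / Sw with hvf
  have hexf : ∃ c ∈ I, f c = vf := exists_preimage_mean hn hIconn hcontf x hx w hw
  set y : ℝ := Function.invFunOn f I vf with hydef
  have hyI : y ∈ I := Function.invFunOn_mem hexf
  have hfy : f y = vf := Function.invFunOn_eq hexf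
  have hsumf : ∑ i, w i * (f (x i) - f y) = 0 := by
    have h1 : f y * Sw = ∑ i, w i * f (x i) := by
      rw [hfy, hvf, div_mul_cancel₀ _ hSwpos.ne']
    have h2 : ∑ i, w i * (f (x i) - f y) = (∑ i, w i * f (x i)) - (∑ i, w i) * f y := by
      rw [Finset.sum_mul, ← Finset.sum_sub_distrib]
      exact Finset.sum_congr rfl (fun i _ => by ring)
    rw [h2, ← hSw]
    linarith [h1]
  -- the g-side mean point
  set Su : ℝ := ∑ i, u i with hSu
  have hSupos : 0 < Su := Finset.sum_pos (fun i _ => hu i) Finset.univ_nonempty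
  set vg : ℝ := (∑ i, u i * g (x i)) / Su with hvg
  have hexg : ∃ c ∈ I, g c = vg := exists_preimage_mean hn hIconn hcontg x hx u hu
  set z : ℝ := Function.invFunOn g I vg with hzdef
  have hzI : z ∈ I := Function.invFunOn_mem hexg
  have hgz : g z = vg := Function.invFunOn_eq hexg
  -- key chain
  set c : ℝ := g' y / f' y with hc
  have htang : ∀ i, ε * c * (f (x i) - f y) ≤ ε * (g (x i) - g y) := fun i =>
    tangent_ineq hIopen hIconn hf hg hmono2 hεg' hεf' hεf1 hf'0 hyI (hx i)
  have hwt : ∀ i, w i * (r y * (ε * (g (x i) - g y))) ≤ u i * (ε * (g (x i) - g y)) := by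
    intro i
    rw [hurel i]
    have hA : r (x i) * (ε * (g (x i) - g y)) ≥ r y * (ε * (g (x i) - g y)) := by
      rcases le_total (x i) y with h | h
      · have hrle : r (x i) ≤ r y := hrmono (hx i) hyI h
        have hAle : ε * (g (x i) - g y) ≤ 0 := by
          rcases eq_or_lt_of_le h with heq | hlt
          · rw [heq]; ring_nf; exact le_refl 0
          · have := hεgm (x i) (hx i) y hyI hlt
            nlinarith
        exact mul_le_mul_of_nonpos_right hrle hAle
      · have hrle : r y ≤ r (x i) := hrmono hyI (hx i) h
        have hAge : 0 ≤ ε * (g (x i) - g y) := by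
          rcases eq_or_lt_of_le h with heq | hlt
          · rw [← heq]; ring_nf; exact le_refl 0
          · have := hεgm y hyI (x i) (hx i) hlt
            nlinarith
        exact mul_le_mul_of_nonneg_right hrle hAge
    calc w i * (r y * (ε * (g (x i) - g y))) ≤ w i * (r (x i) * (ε * (g (x i) - g y))) :=
            mul_le_mul_of_nonneg_left hA (hw i).le
      _ = w i * r (x i) * (ε * (g (x i) - g y)) := by ring
  have hstep2 : ∀ i, w i * (r y * (ε * c * (f (x i) - f y))) ≤
      w i * (r y * (ε * (g (x i) - g y))) := by
    intro i
    have := htang i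
    have hnn : 0 ≤ w i * r y := mul_nonneg (hw i).le (hr y hyI).le
    calc w i * (r y * (ε * c * (f (x i) - f y))) = (w i * r y) * (ε * c * (f (x i) - f y)) := by ring
      _ ≤ (w i * r y) * (ε * (g (x i) - g y)) := mul_le_mul_of_nonneg_left this hnn
      _ = w i * (r y * (ε * (g (x i) - g y))) := by ring
  have hzero : ∑ i, w i * (r y * (ε * c * (f (x i) - f y))) = 0 := by
    have h1 : ∑ i, w i * (r y * (ε * c * (f (x i) - f y))) =
        (r y * (ε * c)) * ∑ i, w i * (f (x i) - f y) := by
      rw [Finset.mul_sum]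
      exact Finset.sum_congr rfl (fun i _ => by ring)
    rw [h1, hsumf, mul_zero]
  have hkey : 0 ≤ ∑ i, u i * (ε * (g (x i) - g y)) := by
    calc (0:ℝ) = ∑ i, w i * (r y * (ε * c * (f (x i) - f y))) := hzero.symm
      _ ≤ ∑ i, w i * (r y * (ε * (g (x i) - g y))) := Finset.sum_le_sum (fun i _ => hstep2 i)
      _ ≤ ∑ i, u i * (ε * (g (x i) - g y)) := Finset.sum_le_sum (fun i _ => hwt i)
  -- conclude ε * g y ≤ ε * vg
  have hgyvg : ε * g y ≤ ε * g z := by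
    rw [hgz, hvg]
    have hexpand : ∑ i, u i * (ε * (g (x i) - g y)) =
        ε * (∑ i, u i * g (x i)) - ε * g y * Su := by
      rw [hSu, Finset.mul_sum, Finset.mul_sum, ← Finset.sum_sub_distrib]
      exact Finset.sum_congr rfl (fun i _ => by ring)
    rw [hexpand] at hkey
    rw [← mul_div_assoc, le_div_iff₀ hSupos]
    linarith
  -- conclude y ≤ z
  by_contra hcon
  push_neg at hcon
  have := hεgm z hzI y hyI hcon
  linarith
end

section
/- Let f, g : I → ℝ be strictly monotone twice continuously differentiable functions with nowhere vanishing first derivatives and let p : I → ℝ_+^n be continuous, with n ≥ 2. Then the following conditions are pairwise equivalent: (i) A_{f,p} is globally smaller than A_{g,p}; (ii) A_{f,p} is locally smaller than A_{g,p}; (iii) the function |g'/f'| is increasing on I; (iv) f''/f' ≤ g''/g' on I; (v) if g is increasing then g ∘ f^{-1} is convex on f(I), and if g is decreasing then g ∘ f^{-1} is concave on f(I); (vi) (f(x) − f(y))/f'(y) ≤ (g(x) − g(y))/g'(y) for all x, y ∈ I. -/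
/-!
Let `Δ = log |g'| - log |f'|` (written `log g' - log f'`, as `Real.log` ignores signs).
Conditions (iii) and (iv) both say that `Δ` is increasing. The function
`t ↦ (g t - g y)/g' y - (f t - f y)/f' y` has derivative `g' t/g' y - f' t/f' y`, whose sign is
that of `Δ t - Δ y`, so for increasing `Δ` it is minimal at `t = y`: this is (vi). In the
variable `v = f t`, (vi) says that `g ∘ f⁻¹` lies above (or below, if `g' < 0`) each of its
tangent lines, which is (v), and Jensen's inequality for `g ∘ f⁻¹` at the points `f (xᵢ)` turns
(v) into (i). Conversely, if (iv) fails at `x₀`, it fails strictly on an interval around `x₀`,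
where the strict tangent inequality compares the means of every non-constant vector strictly the
other way; the vectors `(t, x₀, …, x₀)` then violate (ii).
-/

open Set Function Real

open Filter Topology

section Calculus

variable {I : Set ℝ} {φ φ' : ℝ → ℝ} {x y d : ℝ}

theorem HasDerivAt.nonneg_of_monotoneOn_of_mem_nhds (hd : HasDerivAt φ d x)
    (hφ : MonotoneOn φ I) (hI : I ∈ 𝓝 x) : 0 ≤ d := by
  refine hd.hasDerivWithinAt.nonneg_of_monotoneOn ?_ hφ
  rw [accPt_principal_iff_nhdsWithin, sdiff_eq, inter_comm, nhdsWithin_inter_of_mem']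
  · infer_instance
  · exact mem_nhdsWithin_of_mem_nhds hI

theorem monotoneOn_iff_forall_hasDerivAt_nonneg (hIo : IsOpen I) (hIc : I.OrdConnected)
    (hφ : ∀ x ∈ I, HasDerivAt φ (φ' x) x) : MonotoneOn φ I ↔ ∀ x ∈ I, 0 ≤ φ' x :=
  ⟨fun hmono x hx => (hφ x hx).nonneg_of_monotoneOn_of_mem_nhds hmono (hIo.mem_nhds hx),
    fun h => monotoneOn_of_hasDerivWithinAt_nonneg hIc.convex
      (fun x hx => (hφ x hx).continuousAt.continuousWithinAt)
      (fun x hx => (hφ x (interior_subset hx)).hasDerivWithinAt)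
      (fun x hx => h x (interior_subset hx))⟩

theorem StrictMonoOn.pos_of_hasDerivAt (hφ : StrictMonoOn φ I) (hIo : IsOpen I) (hx : x ∈ I)
    (hd : HasDerivAt φ d x) (hd0 : d ≠ 0) : 0 < d :=
  (hd.nonneg_of_monotoneOn_of_mem_nhds hφ.monotoneOn (hIo.mem_nhds hx)).lt_of_ne' hd0

theorem StrictAntiOn.neg_of_hasDerivAt (hφ : StrictAntiOn φ I) (hIo : IsOpen I) (hx : x ∈ I)
    (hd : HasDerivAt φ d x) (hd0 : d ≠ 0) : d < 0 :=
  neg_pos.mp (hφ.neg.pos_of_hasDerivAt hIo hx hd.neg (neg_ne_zero.mpr hd0))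

theorem le_of_hasDerivAt_nonpos_of_nonneg (hI : I.OrdConnected)
    (hφ : ∀ t ∈ I, HasDerivAt φ (φ' t) t) (hx : x ∈ I) (hy : y ∈ I)
    (hleft : ∀ t ∈ I, t < y → φ' t ≤ 0) (hright : ∀ t ∈ I, y < t → 0 ≤ φ' t) :
    φ y ≤ φ x := by
  have hcont : ContinuousOn φ I := fun t ht => (hφ t ht).continuousAt.continuousWithinAt
  rcases le_total y x with hyx | hxy
  · refine monotoneOn_of_hasDerivWithinAt_nonneg (hI.convex.inter (convex_Ici y))
      (hcont.mono inter_subset_left)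
      (fun t ht => (hφ t (interior_subset ht).1).hasDerivWithinAt) (fun t ht => ?_)
      ⟨hy, self_mem_Ici⟩ ⟨hx, hyx⟩ hyx
    rw [interior_inter, interior_Ici] at ht
    exact hright t (interior_subset ht.1) ht.2
  · refine antitoneOn_of_hasDerivWithinAt_nonpos (hI.convex.inter (convex_Iic y))
      (hcont.mono inter_subset_left)
      (fun t ht => (hφ t (interior_subset ht).1).hasDerivWithinAt) (fun t ht => ?_)
      ⟨hx, hxy⟩ ⟨hy, self_mem_Iic⟩ hxy
    rw [interior_inter, interior_Iic] at ht
    exact hleft t (interior_subset ht.1) ht.2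

theorem lt_of_hasDerivAt_neg_of_pos (hI : I.OrdConnected)
    (hφ : ∀ t ∈ I, HasDerivAt φ (φ' t) t) (hx : x ∈ I) (hy : y ∈ I) (hxy : x ≠ y)
    (hleft : ∀ t ∈ I, t < y → φ' t < 0) (hright : ∀ t ∈ I, y < t → 0 < φ' t) :
    φ y < φ x := by
  have hcont : ContinuousOn φ I := fun t ht => (hφ t ht).continuousAt.continuousWithinAt
  rcases hxy.lt_or_gt with hxy | hyx
  · refine strictAntiOn_of_hasDerivWithinAt_neg (hI.convex.inter (convex_Iic y))
      (hcont.mono inter_subset_left)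
      (fun t ht => (hφ t (interior_subset ht).1).hasDerivWithinAt) (fun t ht => ?_)
      ⟨hx, hxy.le⟩ ⟨hy, self_mem_Iic⟩ hxy
    rw [interior_inter, interior_Iic] at ht
    exact hleft t (interior_subset ht.1) ht.2
  · refine strictMonoOn_of_hasDerivWithinAt_pos (hI.convex.inter (convex_Ici y))
      (hcont.mono inter_subset_left)
      (fun t ht => (hφ t (interior_subset ht).1).hasDerivWithinAt) (fun t ht => ?_)
      ⟨hy, self_mem_Ici⟩ ⟨hx, hyx.le⟩ hyx
    rw [interior_inter, interior_Ici] at ht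
    exact hright t (interior_subset ht.1) ht.2

end Calculus

theorem convexOn_of_forall_exists_le_affine {K : Set ℝ} {h : ℝ → ℝ} (hK : Convex ℝ K)
    (hsupp : ∀ w ∈ K, ∃ c, ∀ v ∈ K, h w + c * (v - w) ≤ h v) : ConvexOn ℝ K h := by
  refine ⟨hK, fun u hu v hv a b ha hb hab => ?_⟩
  obtain ⟨c, hc⟩ := hsupp _ (hK hu hv ha hb hab)
  simp only [smul_eq_mul] at hc ⊢
  linear_combination a * hc u hu + b * hc v hv + (c * (a * u + b * v) - h (a * u + b * v)) * hab

section TangentInequality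

variable {I : Set ℝ} {f f' g g' : ℝ → ℝ}

theorem div_le_div_iff_log_sub_le {a b c d : ℝ} (hab : 0 < a / b) (hcd : 0 < c / d) :
    c / d ≤ a / b ↔ log c - log d ≤ log a - log b := by
  rw [← log_le_log_iff hcd hab, log_div, log_div] <;> rintro rfl <;> simp_all

theorem div_lt_div_iff_log_sub_lt {a b c d : ℝ} (hab : 0 < a / b) (hcd : 0 < c / d) :
    c / d < a / b ↔ log c - log d < log a - log b := by
  rw [← log_lt_log_iff hcd hab, log_div, log_div] <;> rintro rfl <;> simp_all

theorem div_pos_of_hasDerivAt (hIo : IsOpen I) (hf : StrictMonoOn f I ∨ StrictAntiOn f I)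
    (hf' : ∀ x ∈ I, HasDerivAt f (f' x) x) (hf'0 : ∀ x ∈ I, f' x ≠ 0) :
    ∀ x ∈ I, ∀ y ∈ I, 0 < f' x / f' y := by
  intro x hx y hy
  rcases hf with hf | hf
  · exact div_pos (hf.pos_of_hasDerivAt hIo hx (hf' x hx) (hf'0 x hx))
      (hf.pos_of_hasDerivAt hIo hy (hf' y hy) (hf'0 y hy))
  · exact div_pos_of_neg_of_neg (hf.neg_of_hasDerivAt hIo hx (hf' x hx) (hf'0 x hx))
      (hf.neg_of_hasDerivAt hIo hy (hf' y hy) (hf'0 y hy))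

theorem sub_div_neg_iff_of_hasDerivAt (hIo : IsOpen I) (hf : StrictMonoOn f I ∨ StrictAntiOn f I)
    (hf' : ∀ x ∈ I, HasDerivAt f (f' x) x) (hf'0 : ∀ x ∈ I, f' x ≠ 0) {x y : ℝ} (hx : x ∈ I)
    (hy : y ∈ I) : (f x - f y) / f' y < 0 ↔ x < y := by
  rcases hf with hf | hf
  · rw [div_lt_iff₀ (hf.pos_of_hasDerivAt hIo hy (hf' y hy) (hf'0 y hy)), zero_mul, sub_neg,
      hf.lt_iff_lt hx hy]
  · rw [div_lt_iff_of_neg (hf.neg_of_hasDerivAt hIo hy (hf' y hy) (hf'0 y hy)), zero_mul,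
      sub_pos, hf.lt_iff_gt hy hx]

theorem hasDerivAt_sub_div_sub_sub_div (hf : ∀ x ∈ I, HasDerivAt f (f' x) x)
    (hg : ∀ x ∈ I, HasDerivAt g (g' x) x) (y : ℝ) :
    ∀ t ∈ I, HasDerivAt (fun t => (g t - g y) / g' y - (f t - f y) / f' y)
      (g' t / g' y - f' t / f' y) t := fun t ht =>
  (((hg t ht).sub_const _).div_const _).sub (((hf t ht).sub_const _).div_const _)

theorem sub_div_le_sub_div_of_monotoneOn (hI : I.OrdConnected)
    (hf : ∀ x ∈ I, HasDerivAt f (f' x) x) (hg : ∀ x ∈ I, HasDerivAt g (g' x) x)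
    (hf' : ∀ x ∈ I, ∀ y ∈ I, 0 < f' x / f' y) (hg' : ∀ x ∈ I, ∀ y ∈ I, 0 < g' x / g' y)
    (hΔ : MonotoneOn (fun t => log (g' t) - log (f' t)) I) :
    ∀ x ∈ I, ∀ y ∈ I, (f x - f y) / f' y ≤ (g x - g y) / g' y := by
  intro x hx y hy
  have := le_of_hasDerivAt_nonpos_of_nonneg hI (hasDerivAt_sub_div_sub_sub_div hf hg y) hx hy
    (fun t ht hty => ?_) (fun t ht hyt => ?_)
  · simpa [sub_nonneg] using this
  · rw [sub_nonpos, div_le_div_iff_log_sub_le (hf' t ht y hy) (hg' t ht y hy)]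
    linarith [hΔ ht hy hty.le]
  · rw [sub_nonneg, div_le_div_iff_log_sub_le (hg' t ht y hy) (hf' t ht y hy)]
    linarith [hΔ hy ht hyt.le]

theorem sub_div_lt_sub_div_of_strictMonoOn (hI : I.OrdConnected)
    (hf : ∀ x ∈ I, HasDerivAt f (f' x) x) (hg : ∀ x ∈ I, HasDerivAt g (g' x) x)
    (hf' : ∀ x ∈ I, ∀ y ∈ I, 0 < f' x / f' y) (hg' : ∀ x ∈ I, ∀ y ∈ I, 0 < g' x / g' y)
    (hΔ : StrictMonoOn (fun t => log (g' t) - log (f' t)) I) :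
    ∀ x ∈ I, ∀ y ∈ I, x ≠ y → (f x - f y) / f' y < (g x - g y) / g' y := by
  intro x hx y hy hxy
  have := lt_of_hasDerivAt_neg_of_pos hI (hasDerivAt_sub_div_sub_sub_div hf hg y) hx hy hxy
    (fun t ht hty => ?_) (fun t ht hyt => ?_)
  · simpa [sub_pos] using this
  · rw [sub_neg, div_lt_div_iff_log_sub_lt (hf' t ht y hy) (hg' t ht y hy)]
    linarith [hΔ ht hy hty]
  · rw [sub_pos, div_lt_div_iff_log_sub_lt (hg' t ht y hy) (hf' t ht y hy)]
    linarith [hΔ hy ht hyt]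

theorem monotoneOn_abs_div_iff (hf'0 : ∀ x ∈ I, f' x ≠ 0) (hg'0 : ∀ x ∈ I, g' x ≠ 0) :
    MonotoneOn (fun x => |g' x / f' x|) I ↔
      MonotoneOn (fun x => log (g' x) - log (f' x)) I := by
  have hlog : ∀ x ∈ I, log |g' x / f' x| = log (g' x) - log (f' x) := fun x hx => by
    rw [log_abs, log_div (hg'0 x hx) (hf'0 x hx)]
  have hpos : ∀ x ∈ I, 0 < |g' x / f' x| := fun x hx =>
    abs_pos.mpr (div_ne_zero (hg'0 x hx) (hf'0 x hx))
  refine ⟨fun h a ha b hb hab => ?_, fun h a ha b hb hab => ?_⟩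
  · simp only [← hlog a ha, ← hlog b hb]
    exact log_le_log (hpos a ha) (h ha hb hab)
  · rw [← log_le_log_iff (hpos a ha) (hpos b hb), hlog a ha, hlog b hb]
    exact h ha hb hab

theorem monotoneOn_log_sub_log_iff {f'' g'' : ℝ → ℝ} (hIo : IsOpen I) (hI : I.OrdConnected)
    (hf2 : ∀ x ∈ I, HasDerivAt f' (f'' x) x) (hf'0 : ∀ x ∈ I, f' x ≠ 0)
    (hg2 : ∀ x ∈ I, HasDerivAt g' (g'' x) x) (hg'0 : ∀ x ∈ I, g' x ≠ 0) :
    MonotoneOn (fun t => log (g' t) - log (f' t)) I ↔ ∀ x ∈ I, f'' x / f' x ≤ g'' x / g' x := by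
  rw [monotoneOn_iff_forall_hasDerivAt_nonneg (φ := fun t => log (g' t) - log (f' t)) hIo hI
    fun x hx => ((hg2 x hx).log (hg'0 x hx)).sub ((hf2 x hx).log (hf'0 x hx))]
  simp only [sub_nonneg]

theorem convexOn_comp_invFunOn (hI : I.OrdConnected) (hfc : ContinuousOn f I)
    (hfinj : InjOn f I) (hg' : ∀ x ∈ I, 0 < g' x)
    (hfg : ∀ x ∈ I, ∀ y ∈ I, (f x - f y) / f' y ≤ (g x - g y) / g' y) :
    ConvexOn ℝ (f '' I) fun v => g (invFunOn f I v) := by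
  refine convexOn_of_forall_exists_le_affine (hI.isPreconnected.image f hfc).ordConnected.convex ?_
  rintro _ ⟨y, hy, rfl⟩
  refine ⟨g' y / f' y, ?_⟩
  rintro _ ⟨x, hx, rfl⟩
  rw [hfinj.leftInvOn_invFunOn hy, hfinj.leftInvOn_invFunOn hx]
  linear_combination (le_div_iff₀ (hg' y hy)).mp (hfg x hx y hy)

theorem convexOn_concaveOn_comp_invFunOn (hIo : IsOpen I) (hI : I.OrdConnected)
    (hfc : ContinuousOn f I) (hfinj : InjOn f I) (hg : ∀ x ∈ I, HasDerivAt g (g' x) x)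
    (hg'0 : ∀ x ∈ I, g' x ≠ 0)
    (hfg : ∀ x ∈ I, ∀ y ∈ I, (f x - f y) / f' y ≤ (g x - g y) / g' y) :
    (StrictMonoOn g I → ConvexOn ℝ (f '' I) fun v => g (invFunOn f I v)) ∧
      (StrictAntiOn g I → ConcaveOn ℝ (f '' I) fun v => g (invFunOn f I v)) :=
  ⟨fun hgm => convexOn_comp_invFunOn hI hfc hfinj
    (fun x hx => hgm.pos_of_hasDerivAt hIo hx (hg x hx) (hg'0 x hx)) hfg,
  fun hga => neg_convexOn_iff.mp <| convexOn_comp_invFunOn (g := fun t => -g t)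
    (g' := fun t => -g' t) hI hfc hfinj
    (fun x hx => neg_pos.mpr (hga.neg_of_hasDerivAt hIo hx (hg x hx) (hg'0 x hx)))
    (fun x hx y hy => by rw [← neg_sub', neg_div_neg_eq]; exact hfg x hx y hy)⟩

end TangentInequality

section Means

variable {n : ℕ} {I s : Set ℝ} {f f' g g' : ℝ → ℝ} {p : Fin n → ℝ → ℝ} {u : Fin n → ℝ}

theorem bajMean_eq_invFunOn_centerMass :
    bajMean I f p u =
      invFunOn f I (Finset.univ.centerMass (fun i => p i (u i)) fun i => f (u i)) := by
  simp only [bajMean, Finset.centerMass, smul_eq_mul, div_eq_inv_mul]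

theorem sum_mul_sub_div_eq_centerMass {ι : Type*} {t : Finset ι} {w a : ι → ℝ} (b c : ℝ)
    (hw : ∑ i ∈ t, w i ≠ 0) :
    ∑ i ∈ t, w i * ((a i - b) / c) = (∑ i ∈ t, w i) * ((t.centerMass w a - b) / c) := by
  simp only [Finset.centerMass, smul_eq_mul, mul_sub, sub_div, Finset.sum_sub_distrib,
    ← Finset.sum_mul]
  field_simp
  rw [sub_div, Finset.sum_div]

theorem centerMass_mem_image {ι : Type*} [Fintype ι] [Nonempty ι] {w : ι → ℝ} {v : ι → ℝ}
    (hs : s.OrdConnected) (hf : ContinuousOn f s) (hw : ∀ i, 0 < w i) (hv : ∀ i, v i ∈ s) :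
    Finset.univ.centerMass w (fun i => f (v i)) ∈ f '' s :=
  (hs.isPreconnected.image f hf).ordConnected.convex.centerMass_mem (fun i _ => (hw i).le)
    (Finset.sum_pos (fun i _ => hw i) Finset.univ_nonempty)
    (fun i _ => mem_image_of_mem f (hv i))

variable [Nonempty (Fin n)]

theorem apply_bajMean (hI : I.OrdConnected) (hf : ContinuousOn f I)
    (hp : ∀ i, ∀ x ∈ I, 0 < p i x) (hu : ∀ i, u i ∈ I) :
    f (bajMean I f p u) = Finset.univ.centerMass (fun i => p i (u i)) fun i => f (u i) := by
  obtain ⟨z, hz, hfz⟩ := centerMass_mem_image hI hf (fun i => hp i _ (hu i)) hu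
  rw [bajMean_eq_invFunOn_centerMass]
  exact invFunOn_eq ⟨z, hz, hfz⟩

theorem bajMean_mem (hinj : InjOn f I) (hs : s.OrdConnected) (hsI : s ⊆ I)
    (hf : ContinuousOn f s) (hp : ∀ i, ∀ x ∈ I, 0 < p i x) (hu : ∀ i, u i ∈ s) :
    bajMean I f p u ∈ s := by
  obtain ⟨z, hz, hfz⟩ := centerMass_mem_image hs hf (fun i => hp i _ (hsI (hu i))) hu
  rw [bajMean_eq_invFunOn_centerMass, ← hfz, hinj.leftInvOn_invFunOn (hsI hz)]
  exact hz

theorem apply_bajMean_le_of_convexOn (hI : I.OrdConnected) (hfinj : InjOn f I)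
    (hg : ContinuousOn g I) (hp : ∀ i, ∀ x ∈ I, 0 < p i x)
    (hconv : ConvexOn ℝ (f '' I) fun v => g (invFunOn f I v)) (hu : ∀ i, u i ∈ I) :
    g (bajMean I f p u) ≤ g (bajMean I g p u) := by
  have hinv : ∀ i, invFunOn f I (f (u i)) = u i := fun i => hfinj.leftInvOn_invFunOn (hu i)
  rw [bajMean_eq_invFunOn_centerMass, apply_bajMean hI hg hp hu]
  refine (hconv.map_centerMass_le (fun i _ => (hp i _ (hu i)).le)
    (Finset.sum_pos (fun i _ => hp i _ (hu i)) Finset.univ_nonempty)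
    (fun i _ => mem_image_of_mem f (hu i))).trans_eq ?_
  exact congrArg _ (funext fun i => congrArg g (hinv i))

theorem apply_bajMean_le_of_concaveOn (hI : I.OrdConnected) (hfinj : InjOn f I)
    (hg : ContinuousOn g I) (hp : ∀ i, ∀ x ∈ I, 0 < p i x)
    (hconc : ConcaveOn ℝ (f '' I) fun v => g (invFunOn f I v)) (hu : ∀ i, u i ∈ I) :
    g (bajMean I g p u) ≤ g (bajMean I f p u) := by
  have hinv : ∀ i, invFunOn f I (f (u i)) = u i := fun i => hfinj.leftInvOn_invFunOn (hu i)
  rw [bajMean_eq_invFunOn_centerMass (f := f), apply_bajMean hI hg hp hu]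
  refine Eq.trans_le ?_ (hconc.le_map_centerMass (fun i _ => (hp i _ (hu i)).le)
    (Finset.sum_pos (fun i _ => hp i _ (hu i)) Finset.univ_nonempty)
    (fun i _ => mem_image_of_mem f (hu i)))
  exact congrArg _ (funext fun i => congrArg g (hinv i).symm)

theorem bajMean_le_bajMean_of_convexOn_concaveOn (hI : I.OrdConnected) (hfinj : InjOn f I)
    (hfc : ContinuousOn f I) (hgmono : StrictMonoOn g I ∨ StrictAntiOn g I)
    (hgc : ContinuousOn g I) (hp : ∀ i, ∀ x ∈ I, 0 < p i x)
    (hfg : (StrictMonoOn g I → ConvexOn ℝ (f '' I) fun v => g (invFunOn f I v)) ∧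
      (StrictAntiOn g I → ConcaveOn ℝ (f '' I) fun v => g (invFunOn f I v)))
    (hu : ∀ i, u i ∈ I) : bajMean I f p u ≤ bajMean I g p u := by
  have hf_mem := bajMean_mem hfinj hI subset_rfl hfc hp hu
  have hg_mem := bajMean_mem (hgmono.elim StrictMonoOn.injOn StrictAntiOn.injOn) hI subset_rfl
    hgc hp hu
  rcases hgmono with hgm | hga
  · exact (hgm.le_iff_le hf_mem hg_mem).mp
      (apply_bajMean_le_of_convexOn hI hfinj hgc hp (hfg.1 hgm) hu)
  · exact (hga.le_iff_ge hg_mem hf_mem).mp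
      (apply_bajMean_le_of_concaveOn hI hfinj hgc hp (hfg.2 hga) hu)

theorem bajMean_lt_bajMean (hIo : IsOpen I) (hI : I.OrdConnected)
    (hfmono : StrictMonoOn f I ∨ StrictAntiOn f I) (hf : ∀ x ∈ I, HasDerivAt f (f' x) x)
    (hf'0 : ∀ x ∈ I, f' x ≠ 0) (hginj : InjOn g I) (hg : ContinuousOn g I)
    (hp : ∀ i, ∀ x ∈ I, 0 < p i x) (hs : s.OrdConnected) (hsI : s ⊆ I)
    (hfg : ∀ x ∈ s, ∀ y ∈ s, x ≠ y → (f x - f y) / f' y < (g x - g y) / g' y)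
    (hu : ∀ i, u i ∈ s) {i j : Fin n} (hij : u i ≠ u j) :
    bajMean I f p u < bajMean I g p u := by
  have huI : ∀ i, u i ∈ I := fun i => hsI (hu i)
  have hfc : ContinuousOn f I := fun x hx => (hf x hx).continuousAt.continuousWithinAt
  have hfinj : InjOn f I := hfmono.elim StrictMonoOn.injOn StrictAntiOn.injOn
  set y := bajMean I g p u
  have hy : y ∈ s := bajMean_mem hginj hs hsI (hg.mono hsI) hp hu
  have hW : 0 < ∑ i, p i (u i) := Finset.sum_pos (fun i _ => hp i _ (huI i)) Finset.univ_nonempty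
  obtain ⟨k, hk⟩ : ∃ k, u k ≠ y := by
    by_contra! h
    exact hij ((h i).trans (h j).symm)
  have hlt : ∑ i, p i (u i) * ((f (u i) - f y) / f' y) <
      ∑ i, p i (u i) * ((g (u i) - g y) / g' y) := by
    refine Finset.sum_lt_sum (fun i _ => ?_) ⟨k, Finset.mem_univ k, ?_⟩
    · rcases eq_or_ne (u i) y with h | h
      · simp [h]
      · exact mul_le_mul_of_nonneg_left (hfg _ (hu i) y hy h).le (hp i _ (huI i)).le
    · exact mul_lt_mul_of_pos_left (hfg _ (hu k) y hy hk) (hp k _ (huI k))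
  -- the right-hand side vanishes because `y` is the `g`-mean of `u`
  rw [sum_mul_sub_div_eq_centerMass _ _ hW.ne', sum_mul_sub_div_eq_centerMass _ _ hW.ne',
    ← apply_bajMean hI hfc hp huI, ← apply_bajMean hI hg hp huI, sub_self, zero_div,
    mul_zero] at hlt
  rw [← sub_div_neg_iff_of_hasDerivAt hIo hfmono hf hf'0
    (bajMean_mem hfinj hI subset_rfl hfc hp huI) (hsI hy)]
  exact neg_of_mul_neg_right hlt hW.le

end Means

theorem locallySmaller_of_forall_le {n : ℕ} {I : Set ℝ} (hI : IsOpen I)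
    {M N : (Fin n → ℝ) → ℝ} (h : ∀ x : Fin n → ℝ, (∀ i, x i ∈ I) → M x ≤ N x) :
    LocallySmaller I M N :=
  ⟨univ.pi fun _ => I, isOpen_set_pi finite_univ fun _ _ => hI,
    fun _ hx i => hx i (mem_univ i), fun _ hx _ _ => hx,
    fun x hx => h x fun i => hx i (mem_univ i)⟩

theorem exists_update_mem_of_isOpen {n : ℕ} {U : Set (Fin n → ℝ)} (hU : IsOpen U) {x₀ : ℝ}
    (hx₀ : (fun _ => x₀) ∈ U) (i : Fin n) {J : Set ℝ} (hJ : J ∈ 𝓝 x₀) :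
    ∃ t ∈ J, t ≠ x₀ ∧ update (fun _ => x₀) i t ∈ U := by
  have hcont : Continuous fun t => update (fun _ : Fin n => x₀) i t :=
    continuous_const.update i continuous_id
  have hU' : ∀ᶠ t in 𝓝 x₀, update (fun _ => x₀) i t ∈ U :=
    hcont.continuousAt.preimage_mem_nhds (hU.mem_nhds (by rwa [update_eq_self]))
  obtain ⟨t, ⟨htJ, htU⟩, htx⟩ :=
    (((Eventually.and hJ hU').filter_mono nhdsWithin_le_nhds).and self_mem_nhdsWithin).exists
      (f := 𝓝[≠] x₀)
  exact ⟨t, htJ, htx, htU⟩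

theorem exists_Ioo_sub_div_lt_sub_div {I : Set ℝ} (hIo : IsOpen I) {f f' f'' g g' g'' : ℝ → ℝ}
    (hfmono : StrictMonoOn f I ∨ StrictAntiOn f I) (hgmono : StrictMonoOn g I ∨ StrictAntiOn g I)
    (hf : ∀ x ∈ I, HasDerivAt f (f' x) x) (hf2 : ∀ x ∈ I, HasDerivAt f' (f'' x) x)
    (hf2c : ContinuousOn f'' I) (hf'0 : ∀ x ∈ I, f' x ≠ 0)
    (hg : ∀ x ∈ I, HasDerivAt g (g' x) x) (hg2 : ∀ x ∈ I, HasDerivAt g' (g'' x) x)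
    (hg2c : ContinuousOn g'' I) (hg'0 : ∀ x ∈ I, g' x ≠ 0) {x₀ : ℝ} (hx₀ : x₀ ∈ I)
    (hlt : f'' x₀ / f' x₀ < g'' x₀ / g' x₀) :
    ∃ l r, x₀ ∈ Ioo l r ∧ Ioo l r ⊆ I ∧
      ∀ x ∈ Ioo l r, ∀ y ∈ Ioo l r, x ≠ y → (f x - f y) / f' y < (g x - g y) / g' y := by
  have hnhds : ∀ᶠ t in 𝓝 x₀, t ∈ I ∧ f'' t / f' t < g'' t / g' t :=
    Eventually.and (hIo.mem_nhds hx₀) <|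
      ((hf2c.continuousAt (hIo.mem_nhds hx₀)).div (hf2 x₀ hx₀).continuousAt (hf'0 x₀ hx₀))
        |>.eventually_lt
      ((hg2c.continuousAt (hIo.mem_nhds hx₀)).div (hg2 x₀ hx₀).continuousAt (hg'0 x₀ hx₀)) hlt
  obtain ⟨l, r, hx₀J, hJ⟩ := mem_nhds_iff_exists_Ioo_subset.mp hnhds
  have hJI : Ioo l r ⊆ I := fun t ht => (hJ ht).1
  have hd : ∀ t ∈ Ioo l r, HasDerivAt (fun t => log (g' t) - log (f' t))
      (g'' t / g' t - f'' t / f' t) t := fun t ht =>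
    ((hg2 t (hJI ht)).log (hg'0 t (hJI ht))).sub ((hf2 t (hJI ht)).log (hf'0 t (hJI ht)))
  have hΔ : StrictMonoOn (fun t => log (g' t) - log (f' t)) (Ioo l r) :=
    strictMonoOn_of_hasDerivWithinAt_pos (convex_Ioo l r)
      (fun t ht => (hd t ht).continuousAt.continuousWithinAt)
      (fun t ht => (hd t (interior_subset ht)).hasDerivWithinAt)
      (fun t ht => sub_pos.mpr (hJ (interior_subset ht)).2)
  exact ⟨l, r, hx₀J, hJI, sub_div_lt_sub_div_of_strictMonoOn ordConnected_Ioo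
    (fun x hx => hf x (hJI hx)) (fun x hx => hg x (hJI hx))
    (fun x hx y hy => div_pos_of_hasDerivAt hIo hfmono hf hf'0 x (hJI hx) y (hJI hy))
    (fun x hx y hy => div_pos_of_hasDerivAt hIo hgmono hg hg'0 x (hJI hx) y (hJI hy)) hΔ⟩

theorem forall_div_le_of_locallySmaller {n : ℕ} [Nontrivial (Fin n)] {I : Set ℝ}
    (hIo : IsOpen I) (hI : I.OrdConnected) {f f' f'' g g' g'' : ℝ → ℝ} {p : Fin n → ℝ → ℝ}
    (hfmono : StrictMonoOn f I ∨ StrictAntiOn f I) (hgmono : StrictMonoOn g I ∨ StrictAntiOn g I)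
    (hf : ∀ x ∈ I, HasDerivAt f (f' x) x) (hf2 : ∀ x ∈ I, HasDerivAt f' (f'' x) x)
    (hf2c : ContinuousOn f'' I) (hf'0 : ∀ x ∈ I, f' x ≠ 0)
    (hg : ∀ x ∈ I, HasDerivAt g (g' x) x) (hg2 : ∀ x ∈ I, HasDerivAt g' (g'' x) x)
    (hg2c : ContinuousOn g'' I) (hg'0 : ∀ x ∈ I, g' x ≠ 0) (hp : ∀ i, ∀ x ∈ I, 0 < p i x)
    (hfg : LocallySmaller I (bajMean I f p) (bajMean I g p)) :
    ∀ x ∈ I, f'' x / f' x ≤ g'' x / g' x := by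
  obtain ⟨U, hUo, -, hdiag, hUle⟩ := hfg
  intro x₀ hx₀
  by_contra! hlt
  obtain ⟨l, r, hx₀J, hJI, hgf⟩ := exists_Ioo_sub_div_lt_sub_div hIo hgmono hfmono hg hg2 hg2c
    hg'0 hf hf2 hf2c hf'0 hx₀ hlt
  obtain ⟨i, j, hij⟩ := exists_pair_ne (Fin n)
  obtain ⟨t, htJ, htx, htU⟩ :=
    exists_update_mem_of_isOpen hUo (hdiag x₀ hx₀) i (Ioo_mem_nhds hx₀J.1 hx₀J.2)
  have hu : ∀ k, update (fun _ => x₀) i t k ∈ Ioo l r := fun k => by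
    rcases eq_or_ne k i with rfl | hk
    · simpa using htJ
    · simpa [hk] using hx₀J
  have hgf_mean := bajMean_lt_bajMean hIo hI hgmono hg hg'0
    (hfmono.elim StrictMonoOn.injOn StrictAntiOn.injOn)
    (fun x hx => (hf x hx).continuousAt.continuousWithinAt) hp ordConnected_Ioo hJI hgf hu
    (i := i) (j := j) (by simpa [update_of_ne hij.symm] using htx)
  exact (hUle _ htU).not_gt hgf_mean

theorem stmt16_general {n : ℕ} (hn : 2 ≤ n) (I : Set ℝ) (hIopen : IsOpen I)
    (hIconn : I.OrdConnected)
    (f f' f'' g g' g'' : ℝ → ℝ) (p : Fin n → ℝ → ℝ)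
    (hfmono : StrictMonoOn f I ∨ StrictAntiOn f I)
    (hgmono : StrictMonoOn g I ∨ StrictAntiOn g I)
    (hf : ∀ x ∈ I, HasDerivAt f (f' x) x) (hf2 : ∀ x ∈ I, HasDerivAt f' (f'' x) x)
    (hf2c : ContinuousOn f'' I) (hf'0 : ∀ x ∈ I, f' x ≠ 0)
    (hg : ∀ x ∈ I, HasDerivAt g (g' x) x) (hg2 : ∀ x ∈ I, HasDerivAt g' (g'' x) x)
    (hg2c : ContinuousOn g'' I) (hg'0 : ∀ x ∈ I, g' x ≠ 0)
    (hp : ∀ i, ∀ x ∈ I, 0 < p i x) :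
    List.TFAE
      [∀ x : Fin n → ℝ, (∀ i, x i ∈ I) → bajMean I f p x ≤ bajMean I g p x,
       LocallySmaller I (bajMean I f p) (bajMean I g p),
       MonotoneOn (fun x => |g' x / f' x|) I,
       ∀ x ∈ I, f'' x / f' x ≤ g'' x / g' x,
       (StrictMonoOn g I →
          ConvexOn ℝ (f '' I) (fun u => g (Function.invFunOn f I u))) ∧
         (StrictAntiOn g I →
          ConcaveOn ℝ (f '' I) (fun u => g (Function.invFunOn f I u))),
       ∀ x ∈ I, ∀ y ∈ I, (f x - f y) / f' y ≤ (g x - g y) / g' y] := by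
  have : Nontrivial (Fin n) := Fin.nontrivial_iff_two_le.mpr hn
  have hfc : ContinuousOn f I := fun x hx => (hf x hx).continuousAt.continuousWithinAt
  have hfinj : InjOn f I := hfmono.elim StrictMonoOn.injOn StrictAntiOn.injOn
  have hΔ := monotoneOn_log_sub_log_iff hIopen hIconn hf2 hf'0 hg2 hg'0
  tfae_have 1 → 2 := locallySmaller_of_forall_le hIopen
  tfae_have 2 → 4 := forall_div_le_of_locallySmaller hIopen hIconn hfmono hgmono hf hf2 hf2c
    hf'0 hg hg2 hg2c hg'0 hp
  tfae_have 3 ↔ 4 := (monotoneOn_abs_div_iff hf'0 hg'0).trans hΔ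
  tfae_have 4 → 6 := fun h => sub_div_le_sub_div_of_monotoneOn hIconn hf hg
    (div_pos_of_hasDerivAt hIopen hfmono hf hf'0) (div_pos_of_hasDerivAt hIopen hgmono hg hg'0)
    (hΔ.mpr h)
  tfae_have 6 → 5 := convexOn_concaveOn_comp_invFunOn hIopen hIconn hfc hfinj hg hg'0
  tfae_have 5 → 1 := fun h x hx => bajMean_le_bajMean_of_convexOn_concaveOn hIconn hfinj hfc
    hgmono (fun x hx => (hg x hx).continuousAt.continuousWithinAt) hp h hx
  tfae_finish

/-- Theorem 3: for strictly monotone twice continuously differentiable `f, g` with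
nonvanishing first derivatives and continuous `p : I → ℝ₊ⁿ`, the conditions
(i) `A_{f,p}` globally smaller than `A_{g,p}`, (ii) `A_{f,p}` locally smaller than
`A_{g,p}`, (iii) `|g'/f'|` increasing on `I`, (iv) `f''/f' ≤ g''/g'` on `I`,
(v) `g∘f⁻¹` convex on `f(I)` if `g` increasing / concave if `g` decreasing,
(vi) `(f(x)-f(y))/f'(y) ≤ (g(x)-g(y))/g'(y)` for all `x, y ∈ I`,
are pairwise equivalent. -/
theorem stmt16 {n : ℕ} (hn : 2 ≤ n) (I : Set ℝ) (hIopen : IsOpen I)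
    (hIconn : I.OrdConnected) (hIne : I.Nonempty)
    (f f' f'' g g' g'' : ℝ → ℝ) (p : Fin n → ℝ → ℝ)
    (hfmono : StrictMonoOn f I ∨ StrictAntiOn f I)
    (hgmono : StrictMonoOn g I ∨ StrictAntiOn g I)
    (hf : ∀ x ∈ I, HasDerivAt f (f' x) x) (hf2 : ∀ x ∈ I, HasDerivAt f' (f'' x) x)
    (hf2c : ContinuousOn f'' I) (hf'0 : ∀ x ∈ I, f' x ≠ 0)
    (hg : ∀ x ∈ I, HasDerivAt g (g' x) x) (hg2 : ∀ x ∈ I, HasDerivAt g' (g'' x) x)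
    (hg2c : ContinuousOn g'' I) (hg'0 : ∀ x ∈ I, g' x ≠ 0)
    (hp : ∀ i, ∀ x ∈ I, 0 < p i x) (hpc : ∀ i, ContinuousOn (p i) I) :
    List.TFAE
      [∀ x : Fin n → ℝ, (∀ i, x i ∈ I) → bajMean I f p x ≤ bajMean I g p x,
       LocallySmaller I (bajMean I f p) (bajMean I g p),
       MonotoneOn (fun x => |g' x / f' x|) I,
       ∀ x ∈ I, f'' x / f' x ≤ g'' x / g' x,
       (StrictMonoOn g I →
          ConvexOn ℝ (f '' I) (fun u => g (Function.invFunOn f I u))) ∧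
         (StrictAntiOn g I →
          ConcaveOn ℝ (f '' I) (fun u => g (Function.invFunOn f I u))),
       ∀ x ∈ I, ∀ y ∈ I, (f x - f y) / f' y ≤ (g x - g y) / g' y] :=
  stmt16_general hn I hIopen hIconn f f' f'' g g' g'' p hfmono hgmono hf hf2 hf2c hf'0 hg hg2 hg2c
    hg'0 hp
end

section
/- Let I ⊆ (0,∞) be a nonempty open interval, let f, g : I → ℝ be strictly monotone differentiable functions with nowhere vanishing first derivatives, let n ≥ 2, let λ_1,…,λ_n, μ_1,…,μ_n > 0 and α_1,…,α_n, β_1,…,β_n ∈ ℝ, and define p_i(x) := λ_i x^{α_i} and q_i(x) := μ_i x^{β_i}. Assume that there exist γ > 0 and δ ∈ ℝ such that μ_i = γ λ_i and β_i = α_i + δ for all i ∈ {1,…,n}, and that (f(x) − f(y))/f'(y) ≤ x^δ (g(x) − g(y)) / (y^δ g'(y)) for all x, y ∈ I. Then A_{f,p} is globally smaller than A_{g,q}, i.e., A_{f,p}(x_1,…,x_n) ≤ A_{g,q}(x_1,…,x_n) for all x_1,…,x_n ∈ I. -/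
open Set Function Real

private lemma avgMem' {n : ℕ} (hn : 0 < n) {S : Set ℝ} (hS : S.OrdConnected)
    (w v : Fin n → ℝ) (hw : ∀ i, 0 < w i) (hv : ∀ i, v i ∈ S) :
    (∑ i, w i * v i) / (∑ i, w i) ∈ S := by
  haveI : Nonempty (Fin n) := Fin.pos_iff_nonempty.mp hn
  obtain ⟨j0, -, h0⟩ := Finset.exists_min_image Finset.univ v Finset.univ_nonempty
  obtain ⟨j1, -, h1⟩ := Finset.exists_max_image Finset.univ v Finset.univ_nonempty
  have hwsum : 0 < ∑ i, w i := Finset.sum_pos (fun i _ => hw i) Finset.univ_nonempty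
  have hlow : v j0 * (∑ i, w i) ≤ ∑ i, w i * v i := by
    rw [Finset.mul_sum]
    refine Finset.sum_le_sum fun i _ => ?_
    rw [mul_comm]
    exact mul_le_mul_of_nonneg_left (h0 i (Finset.mem_univ i)) (hw i).le
  have hhigh : ∑ i, w i * v i ≤ (∑ i, w i) * v j1 := by
    rw [Finset.sum_mul]
    exact Finset.sum_le_sum fun i _ =>
      mul_le_mul_of_nonneg_left (h1 i (Finset.mem_univ i)) (hw i).le
  exact hS.out (hv j0) (hv j1) ⟨(le_div_iff₀ hwsum).mpr hlow, (div_le_iff₀ hwsum).mpr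
    (by linarith)⟩

private lemma deriv_nonneg_of_smon' {I : Set ℝ} (hI : IsOpen I) {f : ℝ → ℝ} {y c : ℝ}
    (hy : y ∈ I) (hm : StrictMonoOn f I) (hd : HasDerivAt f c y) : 0 ≤ c := by
  have hs := hasDerivAt_iff_tendsto_slope.mp hd
  refine ge_of_tendsto hs ?_
  filter_upwards [self_mem_nhdsWithin,
    eventually_nhdsWithin_of_eventually_nhds (hI.eventually_mem hy)] with z hz hzI
  have hzy : z ≠ y := hz
  rcases hzy.lt_or_gt with h | h
  · rw [slope_def_field]
    exact div_nonneg_of_nonpos (by linarith [hm hzI hy h]) (by linarith)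
  · rw [slope_def_field]
    exact div_nonneg (by linarith [hm hy hzI h]) (by linarith)

/-- Corollary 2: with power weights `pᵢ(x) = λᵢ x^{αᵢ}`, `qᵢ(x) = μᵢ x^{βᵢ}` on
`I ⊆ (0,∞)`, strictly monotone differentiable `f, g` with nonvanishing first
derivatives, if `μᵢ = γλᵢ`, `βᵢ = αᵢ + δ` for all `i` (with `γ > 0`) and
`(f(x)-f(y))/f'(y) ≤ x^δ(g(x)-g(y))/(y^δ g'(y))` for all `x, y ∈ I`, then `A_{f,p}` is
globally smaller than `A_{g,q}`. -/
theorem stmt18 {n : ℕ} (hn : 2 ≤ n) (I : Set ℝ) (hIopen : IsOpen I)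
    (hIconn : I.OrdConnected) (hIne : I.Nonempty) (hIpos : I ⊆ Set.Ioi (0 : ℝ))
    (f f' g g' : ℝ → ℝ)
    (hfmono : StrictMonoOn f I ∨ StrictAntiOn f I)
    (hgmono : StrictMonoOn g I ∨ StrictAntiOn g I)
    (hf : ∀ x ∈ I, HasDerivAt f (f' x) x) (hf'0 : ∀ x ∈ I, f' x ≠ 0)
    (hg : ∀ x ∈ I, HasDerivAt g (g' x) x) (hg'0 : ∀ x ∈ I, g' x ≠ 0)
    (lam mu : Fin n → ℝ) (al be : Fin n → ℝ)
    (hlam : ∀ i, 0 < lam i) (hmu : ∀ i, 0 < mu i)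
    (γ δ : ℝ) (hγ : 0 < γ)
    (hrel : ∀ i : Fin n, mu i = γ * lam i ∧ be i = al i + δ)
    (hkey : ∀ x ∈ I, ∀ y ∈ I,
      (f x - f y) / f' y ≤ x ^ δ * (g x - g y) / (y ^ δ * g' y)) :
    ∀ x : Fin n → ℝ, (∀ i, x i ∈ I) →
      bajMean I f (fun i y => lam i * y ^ al i) x ≤
        bajMean I g (fun i y => mu i * y ^ be i) x := by
  intro x hx
  haveI : Nonempty (Fin n) := Fin.pos_iff_nonempty.mp (by omega)
  set P : Fin n → ℝ := fun i => lam i * (x i) ^ al i with hPdef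
  set Q : Fin n → ℝ := fun i => mu i * (x i) ^ be i with hQdef
  have hxpos : ∀ i, 0 < x i := fun i => hIpos (hx i)
  have hPpos : ∀ i, 0 < P i := fun i => mul_pos (hlam i) (rpow_pos_of_pos (hxpos i) _)
  have hQpos : ∀ i, 0 < Q i := fun i => mul_pos (hmu i) (rpow_pos_of_pos (hxpos i) _)
  have hPsum : 0 < ∑ i, P i := Finset.sum_pos (fun i _ => hPpos i) Finset.univ_nonempty
  have hQsum : 0 < ∑ i, Q i := Finset.sum_pos (fun i _ => hQpos i) Finset.univ_nonempty
  have hfc : ContinuousOn f I := fun z hz => (hf z hz).continuousAt.continuousWithinAt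
  have hgc : ContinuousOn g I := fun z hz => (hg z hz).continuousAt.continuousWithinAt
  have hfI : (f '' I).OrdConnected := (hIconn.isPreconnected.image f hfc).ordConnected
  have hgI : (g '' I).OrdConnected := (hIconn.isPreconnected.image g hgc).ordConnected
  have havgf : (∑ i, P i * f (x i)) / (∑ i, P i) ∈ f '' I :=
    avgMem' (by omega) hfI P (fun i => f (x i)) hPpos (fun i => mem_image_of_mem f (hx i))
  have havgg : (∑ i, Q i * g (x i)) / (∑ i, Q i) ∈ g '' I :=
    avgMem' (by omega) hgI Q (fun i => g (x i)) hQpos (fun i => mem_image_of_mem g (hx i))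
  obtain ⟨a, haI, ha⟩ := havgf
  obtain ⟨b, hbI, hb⟩ := havgg
  set z := Function.invFunOn f I ((∑ i, P i * f (x i)) / (∑ i, P i)) with hzdef
  set y := Function.invFunOn g I ((∑ i, Q i * g (x i)) / (∑ i, Q i)) with hydef
  have hzI : z ∈ I := Function.invFunOn_mem ⟨a, haI, ha⟩
  have hyI : y ∈ I := Function.invFunOn_mem ⟨b, hbI, hb⟩
  have hfz : f z = (∑ i, P i * f (x i)) / (∑ i, P i) := Function.invFunOn_eq ⟨a, haI, ha⟩
  have hgy : g y = (∑ i, Q i * g (x i)) / (∑ i, Q i) := Function.invFunOn_eq ⟨b, hbI, hb⟩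
  have hgoal : bajMean I f (fun i y => lam i * y ^ al i) x = z := rfl
  have hgoal2 : bajMean I g (fun i y => mu i * y ^ be i) x = y := rfl
  rw [hgoal, hgoal2]
  -- the sum ∑ Q i (g xᵢ - g y) vanishes
  have hsumg : ∑ i, Q i * g (x i) = (∑ i, Q i) * g y := by
    rw [hgy, mul_comm, div_mul_cancel₀ _ hQsum.ne']
  have hsum0 : ∑ i, Q i * (g (x i) - g y) = 0 := by
    simp only [mul_sub, Finset.sum_sub_distrib, ← Finset.sum_mul, hsumg, sub_self]
  -- Q i = γ * (P i * (x i)^δ)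
  have hQeq : ∀ i, Q i = γ * (P i * (x i) ^ δ) := by
    intro i
    have h1 := (hrel i).1
    have h2 := (hrel i).2
    simp only [hQdef, hPdef, h1, h2, rpow_add (hxpos i)]
    ring
  -- key summed inequality
  have hkeysum : ∑ i, P i * ((f (x i) - f y) / f' y) ≤
      ∑ i, P i * ((x i) ^ δ * (g (x i) - g y) / (y ^ δ * g' y)) :=
    Finset.sum_le_sum fun i _ =>
      mul_le_mul_of_nonneg_left (hkey _ (hx i) _ hyI) (hPpos i).le
  have hypos : 0 < y := hIpos hyI
  have hyδ : (0:ℝ) < y ^ δ := rpow_pos_of_pos hypos _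
  have hRHS : ∑ i, P i * ((x i) ^ δ * (g (x i) - g y) / (y ^ δ * g' y)) = 0 := by
    have heq : ∀ i, P i * ((x i) ^ δ * (g (x i) - g y) / (y ^ δ * g' y)) =
        (Q i * (g (x i) - g y)) * (γ * (y ^ δ * g' y))⁻¹ := by
      intro i
      have hc : γ * γ⁻¹ = 1 := mul_inv_cancel₀ hγ.ne'
      rw [hQeq i]
      linear_combination (-(P i * (x i ^ δ * (g (x i) - g y) / (y ^ δ * g' y)))) * hc
    rw [Finset.sum_congr rfl (fun i _ => heq i), ← Finset.sum_mul, hsum0, zero_mul]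
  have hkey2 : (∑ i, P i * (f (x i) - f y)) / f' y ≤ 0 := by
    have : ∑ i, P i * ((f (x i) - f y) / f' y) = (∑ i, P i * (f (x i) - f y)) / f' y := by
      simp only [div_eq_mul_inv, Finset.sum_mul, mul_assoc]
    linarith [hRHS ▸ hkeysum, this]
  have hsplit : ∑ i, P i * (f (x i) - f y) = ∑ i, P i * f (x i) - (∑ i, P i) * f y := by
    simp only [mul_sub, Finset.sum_sub_distrib, ← Finset.sum_mul]
  rcases hfmono with hm | hm
  · have hfpos : 0 < f' y :=
      lt_of_le_of_ne (deriv_nonneg_of_smon' hIopen hyI hm (hf y hyI)) (Ne.symm (hf'0 y hyI))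
    have hS : ∑ i, P i * (f (x i) - f y) ≤ 0 := by
      rcases div_nonpos_iff.mp hkey2 with ⟨_, h⟩ | ⟨h, _⟩
      · linarith
      · exact h
    have : f z ≤ f y := by
      rw [hfz, div_le_iff₀ hPsum]
      linarith [hsplit]
    by_contra hcon
    push_neg at hcon
    exact absurd (hm hyI hzI hcon) (not_lt.mpr this)
  · have hmneg : StrictMonoOn (fun t => -f t) I := fun a ha b hb hab => neg_lt_neg (hm ha hb hab)
    have hfneg : 0 ≤ -f' y := deriv_nonneg_of_smon' hIopen hyI hmneg (hf y hyI).neg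
    have hfneg' : f' y < 0 := lt_of_le_of_ne (by linarith) (hf'0 y hyI)
    have hS : 0 ≤ ∑ i, P i * (f (x i) - f y) := by
      rcases div_nonpos_iff.mp hkey2 with ⟨h, _⟩ | ⟨_, h⟩
      · exact h
      · linarith
    have : f y ≤ f z := by
      rw [hfz, le_div_iff₀ hPsum]
      linarith [hsplit]
    by_contra hcon
    push_neg at hcon
    exact absurd (hm hyI hzI hcon) (not_lt.mpr this)
end
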